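/- arXiv:1801.00144 — 7 statements merged into one kernel-verified Lean document; each statement's English description precedes it below -/
import Mathlib

section
/- Let H be a self-adjoint operator on a separable complex Hilbert space and V a bounded self-adjoint operator with polar-type factorization V = √|V| J √|V| where J* = J, J² = id. For z in the resolvent set of H, the operator Ω(z) := (id − √|V| R(z) √|V| J)^{−1} exists as a bounded operator if and only if z is in the resolvent set of H+V, and in that case Ω(z) = id + √|V| (z − H − V)^{−1} √|V| J. -/
lemma swap_aux {A : Type*} [Ring A] (a b c : A) (h1 : (1 - b*a)*c = 1) (h2 : c*(1 - b*a) = 1) :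
    (1 - a*b)*(1 + a*c*b) = 1 ∧ (1 + a*c*b)*(1 - a*b) = 1 := by
  constructor
  · calc (1 - a*b)*(1 + a*c*b) = 1 - a*b + a*((1-b*a)*c)*b := by noncomm_ring
    _ = 1 - a*b + a*1*b := by rw [h1]
    _ = 1 := by noncomm_ring
  · calc (1 + a*c*b)*(1 - a*b) = 1 - a*b + a*(c*(1-b*a))*b := by noncomm_ring
    _ = 1 - a*b + a*1*b := by rw [h2]
    _ = 1 := by noncomm_ring

/-- For a self-adjoint operator `H` on a separable complex Hilbert space and a
bounded self-adjoint `V` with polar-type factorization `V = √|V| J √|V|` (`J* = J`, `J² = 1`),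
and `z` in the resolvent set of `H`, the wave operator
`Ω(z) = (1 - √|V| R(z) √|V| J)⁻¹` exists as a bounded operator iff `z` lies in the resolvent set
of `H + V`, in which case `Ω(z) = 1 + √|V| (z - H - V)⁻¹ √|V| J`. -/
theorem stmt0 {𝓗 : Type*} [NormedAddCommGroup 𝓗] [InnerProductSpace ℂ 𝓗] [CompleteSpace 𝓗]
    [TopologicalSpace.SeparableSpace 𝓗]
    (H V sqrtV J : 𝓗 →L[ℂ] 𝓗)
    (hH : IsSelfAdjoint H) (hV : IsSelfAdjoint V) (hsV : IsSelfAdjoint sqrtV)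
    (hJ : IsSelfAdjoint J) (hJ2 : J * J = 1) (hfac : V = sqrtV * J * sqrtV)
    (z : ℂ) (hz : z ∈ resolventSet ℂ H) :
    (IsUnit (1 - sqrtV * resolvent H z * sqrtV * J) ↔ z ∈ resolventSet ℂ (H + V)) ∧
    (z ∈ resolventSet ℂ (H + V) →
      Ring.inverse (1 - sqrtV * resolvent H z * sqrtV * J)
        = 1 + sqrtV * resolvent (H + V) z * sqrtV * J) := by
  set A : 𝓗 →L[ℂ] 𝓗 := algebraMap ℂ (𝓗 →L[ℂ] 𝓗) z - H with hAdef
  have hA : IsUnit A := spectrum.mem_resolventSet_iff.mp hz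
  set R : 𝓗 →L[ℂ] 𝓗 := resolvent H z with hRdef
  have hRinv : R = Ring.inverse A := rfl
  have hRA : R * A = 1 := by rw [hRinv]; exact Ring.inverse_mul_cancel A hA
  have hAR : A * R = 1 := by rw [hRinv]; exact Ring.mul_inverse_cancel A hA
  set B : 𝓗 →L[ℂ] 𝓗 := algebraMap ℂ (𝓗 →L[ℂ] 𝓗) z - (H + V) with hBdef
  have hBinv : resolvent (H + V) z = Ring.inverse B := rfl
  have hBA : B = A * (1 - R * V) := by
    have : A * (1 - R * V) = A - V := by
      rw [mul_sub, mul_one, ← mul_assoc, hAR, one_mul]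
    rw [this, hBdef, hAdef, sub_sub]
  have hmem : z ∈ resolventSet ℂ (H + V) ↔ IsUnit B := spectrum.mem_resolventSet_iff
  have hBunit : IsUnit B ↔ IsUnit (1 - R * V) := by
    rw [hBA, ← hA.unit_spec]
    exact Units.isUnit_units_mul hA.unit _
  have hba : (R * sqrtV * J) * sqrtV = R * V := by rw [hfac]; noncomm_ring
  have hassoc : sqrtV * resolvent H z * sqrtV * J = sqrtV * (R * sqrtV * J) := by
    rw [← hRdef]; noncomm_ring
  -- from IsUnit B, build the explicit inverse of 1 - sqrtV * (R * sqrtV * J)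
  have key : ∀ hB : IsUnit B,
      (1 - sqrtV * (R * sqrtV * J)) * (1 + sqrtV * (Ring.inverse B * A) * (R * sqrtV * J)) = 1 ∧
      (1 + sqrtV * (Ring.inverse B * A) * (R * sqrtV * J)) * (1 - sqrtV * (R * sqrtV * J)) = 1 := by
    intro hB
    have hRB : R * B = 1 - R * V := by
      have hAV : B = A - V := by rw [hBdef, hAdef, sub_sub]
      rw [hAV, mul_sub, hRA]
    have h1 : (1 - (R * sqrtV * J) * sqrtV) * (Ring.inverse B * A) = 1 := by
      rw [hba, ← hRB]
      calc R * B * (Ring.inverse B * A) = R * (B * Ring.inverse B) * A := by noncomm_ring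
      _ = 1 := by rw [Ring.mul_inverse_cancel B hB, mul_one, hRA]
    have h2 : (Ring.inverse B * A) * (1 - (R * sqrtV * J) * sqrtV) = 1 := by
      rw [hba, ← hRB]
      calc (Ring.inverse B * A) * (R * B) = Ring.inverse B * (A * R) * B := by noncomm_ring
      _ = 1 := by rw [hAR, mul_one, Ring.inverse_mul_cancel B hB]
    exact swap_aux sqrtV (R * sqrtV * J) (Ring.inverse B * A) h1 h2
  constructor
  · constructor
    · intro h
      rw [hmem, hBunit]
      rw [hassoc] at h
      obtain ⟨u, hu⟩ := h
      have h1 : (1 - sqrtV * (R * sqrtV * J)) * ↑u⁻¹ = 1 := by rw [← hu]; exact u.mul_inv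
      have h2 : (↑u⁻¹ : 𝓗 →L[ℂ] 𝓗) * (1 - sqrtV * (R * sqrtV * J)) = 1 := by
        rw [← hu]; exact u.inv_mul
      obtain ⟨ha, hb⟩ := swap_aux (R * sqrtV * J) sqrtV (↑u⁻¹) h1 h2
      rw [hba] at ha hb
      exact ⟨⟨1 - R * V, _, ha, hb⟩, rfl⟩
    · intro h
      have hB := hmem.mp h
      obtain ⟨ha, hb⟩ := key hB
      rw [hassoc]
      exact ⟨⟨_, _, ha, hb⟩, rfl⟩
  · intro h
    have hB := hmem.mp h
    obtain ⟨ha, hb⟩ := key hB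
    have hu : IsUnit (1 - sqrtV * (R * sqrtV * J)) := ⟨⟨_, _, ha, hb⟩, rfl⟩
    rw [hassoc]
    have : Ring.inverse (1 - sqrtV * (R * sqrtV * J))
        = 1 + sqrtV * (Ring.inverse B * A) * (R * sqrtV * J) := by
      have := Ring.inverse_unit (⟨_, _, ha, hb⟩ : (𝓗 →L[ℂ] 𝓗)ˣ)
      exact this
    rw [this, hBinv]
    congr 1
    calc sqrtV * (Ring.inverse B * A) * (R * sqrtV * J)
        = sqrtV * Ring.inverse B * (A * R) * sqrtV * J := by noncomm_ring
    _ = sqrtV * Ring.inverse B * sqrtV * J := by rw [hAR, mul_one]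
end

section
/- Let H be self-adjoint, V bounded self-adjoint with V = √|V| J √|V| (J self-adjoint, J² = id), and let z ∈ ℂ with Im(z) ≠ 0. If κ ∈ ℂ \ {0} is an eigenvalue of the Birman–Schwinger operator K(z) = √|V| R(z) √|V| J, then Im(κ) ≠ 0. -/
open ContinuousLinearMap
open scoped InnerProductSpace ComplexConjugate

/-- For self-adjoint `H`, bounded self-adjoint `V = √|V| J √|V|`
(`J* = J`, `J² = 1`) and `z ∈ ℂ` with `Im z ≠ 0`: if `κ ≠ 0` is an eigenvalue of the
Birman–Schwinger operator `K(z) = √|V| R(z) √|V| J`, then `Im κ ≠ 0`. -/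
theorem stmt1 {𝓗 : Type*} [NormedAddCommGroup 𝓗] [InnerProductSpace ℂ 𝓗] [CompleteSpace 𝓗]
    (H V sqrtV J : 𝓗 →L[ℂ] 𝓗)
    (hH : IsSelfAdjoint H) (hV : IsSelfAdjoint V) (hsV : IsSelfAdjoint sqrtV)
    (hJ : IsSelfAdjoint J) (hJ2 : J * J = 1) (hfac : V = sqrtV * J * sqrtV)
    (z κ : ℂ) (hz : z.im ≠ 0) (hκ : κ ≠ 0)
    (heig : ∃ φ : 𝓗, φ ≠ 0 ∧ (sqrtV * resolvent H z * sqrtV * J) φ = κ • φ) :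
    κ.im ≠ 0 := by
  obtain ⟨φ, hφ, heq⟩ := heig
  intro hκim
  have hzs : z ∉ spectrum ℂ H := by
    intro hmem
    have h := hH.mem_spectrum_eq_re hmem
    apply hz
    rw [h]; simp
  have hunit : IsUnit (algebraMap ℂ (𝓗 →L[ℂ] 𝓗) z - H) := spectrum.notMem_iff.mp hzs
  set R := resolvent H z with hR
  have hRinv : (algebraMap ℂ (𝓗 →L[ℂ] 𝓗) z - H) * R = 1 := by
    rw [hR, resolvent]; exact Ring.mul_inverse_cancel _ hunit
  set u := sqrtV (J φ) with hu
  set ψ := R u with hψdef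
  have hsVψ : sqrtV ψ = κ • φ := by
    simpa [mul_apply, hu, hψdef] using heq
  have hAψ : z • ψ - H ψ = u := by
    have h := congrArg (fun T => T u) hRinv
    simpa [mul_apply, one_apply, sub_apply, Algebra.algebraMap_eq_smul_one, smul_apply] using h
  -- imaginary part of quadratic form of a self-adjoint operator vanishes
  have key : ∀ (A : 𝓗 →L[ℂ] 𝓗), IsSelfAdjoint A → ∀ x : 𝓗, (⟪A x, x⟫_ℂ).im = 0 := by
    intro A hA x
    have h : ⟪A x, x⟫_ℂ = ⟪x, A x⟫_ℂ := hA.isSymmetric x x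
    have h2 : conj ⟪A x, x⟫_ℂ = ⟪x, A x⟫_ℂ := inner_conj_symm x (A x)
    rw [← h] at h2
    exact Complex.conj_eq_iff_im.mp h2
  -- first computation of the inner product
  have h1 : ⟪u, ψ⟫_ℂ = κ * ⟪J φ, φ⟫_ℂ := by
    have h : ⟪sqrtV (J φ), ψ⟫_ℂ = ⟪J φ, sqrtV ψ⟫_ℂ := hsV.isSymmetric (J φ) ψ
    rw [hu, h, hsVψ, inner_smul_right]
  -- second computation
  have h2 : ⟪u, ψ⟫_ℂ = conj z * ⟪ψ, ψ⟫_ℂ - ⟪H ψ, ψ⟫_ℂ := by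
    rw [← hAψ, inner_sub_left, inner_smul_left]
  -- imaginary parts
  have hHre : (⟪H ψ, ψ⟫_ℂ).im = 0 := key H hH ψ
  have hJre : (⟪J φ, φ⟫_ℂ).im = 0 := key J hJ φ
  have hself : (⟪ψ, ψ⟫_ℂ).im = 0 := by
    have h2 : conj ⟪ψ, ψ⟫_ℂ = ⟪ψ, ψ⟫_ℂ := inner_conj_symm ψ ψ
    exact Complex.conj_eq_iff_im.mp h2
  -- take imaginary part of h1 = h2
  have him : (κ * ⟪J φ, φ⟫_ℂ).im = (conj z * ⟪ψ, ψ⟫_ℂ - ⟪H ψ, ψ⟫_ℂ).im := by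
    rw [← h1, ← h2]
  rw [Complex.mul_im, hκim, hJre] at him
  rw [Complex.sub_im, Complex.mul_im, hHre, hself, Complex.conj_re, Complex.conj_im] at him
  simp only [mul_zero, zero_mul, add_zero, zero_add, sub_zero] at him
  have hψz : ⟪ψ, ψ⟫_ℂ = 0 := by
    have hre : (⟪ψ, ψ⟫_ℂ).re = 0 := by
      rcases mul_eq_zero.mp him.symm with h | h
      · exact absurd (neg_eq_zero.mp h) hz
      · exact h
    exact Complex.ext hre hself
  have hψ0 : ψ = 0 := inner_self_eq_zero.mp hψz
  rw [hψ0, map_zero] at hsVψ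
  rcases smul_eq_zero.mp hsVψ.symm with h | h
  · exact hκ h
  · exact hφ h
end

section
/- Under the assumptions that √|V| R(z₀) ∈ B₂ and √|V| R(z₀) √|V| ∈ B₁ for some z₀ in the resolvent set of H, the map z ↦ √|V| R(z) √|V| is trace class for all z in the resolvent set of H and is holomorphic with respect to the trace norm, with derivative √|V| R(z)² √|V|. -/
/-
Since `R(z₀)(z₀ - H) = 1`, every `√|V| R(z)` equals `√|V| R(z₀) · (z₀ - H) R(z)` and so is
Hilbert–Schmidt; taking adjoints (`R(z)* = R(z̄)`) the same holds for `R(z) √|V|`. Hence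
`√|V| R(z) √|V| = √|V| R(z₀) · (z₀ - H) R(z) √|V|` is a product of two Hilbert–Schmidt operators.
By the first resolvent identity the error term of the difference quotient is
`√|V| R(z) · (z - w) R(w) · R(z) √|V|`, whose trace norm is at most
`‖√|V| R(z)‖₂ ‖(z - w) R(w)‖ ‖R(z) √|V|‖₂ → 0`.
-/

/-- The Hilbert–Schmidt norm of an operator, computed in a fixed Hilbert basis. -/
noncomputable def hsNorm {𝓗 : Type*} [NormedAddCommGroup 𝓗] [InnerProductSpace ℂ 𝓗]
    (e : HilbertBasis ℕ ℂ 𝓗) (T : 𝓗 →L[ℂ] 𝓗) : ℝ :=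
  Real.sqrt (∑' n, ‖T (e n)‖ ^ 2)

/-- `T` is Hilbert–Schmidt (w.r.t. the basis `e`; this is basis-independent). -/
def IsHS {𝓗 : Type*} [NormedAddCommGroup 𝓗] [InnerProductSpace ℂ 𝓗]
    (e : HilbertBasis ℕ ℂ 𝓗) (T : 𝓗 →L[ℂ] 𝓗) : Prop :=
  Summable (fun n => ‖T (e n)‖ ^ 2)

/-- `T` is trace class: it factors as a product of two Hilbert–Schmidt operators. -/
def IsTraceClass {𝓗 : Type*} [NormedAddCommGroup 𝓗] [InnerProductSpace ℂ 𝓗]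
    (e : HilbertBasis ℕ ℂ 𝓗) (T : 𝓗 →L[ℂ] 𝓗) : Prop :=
  ∃ A B : 𝓗 →L[ℂ] 𝓗, IsHS e A ∧ IsHS e B ∧ T = A * B

/-- The trace norm, characterized as the infimum of `‖A‖₂ ‖B‖₂` over factorizations `T = A B`
into Hilbert–Schmidt operators. -/
noncomputable def traceNorm {𝓗 : Type*} [NormedAddCommGroup 𝓗] [InnerProductSpace ℂ 𝓗]
    (e : HilbertBasis ℕ ℂ 𝓗) (T : 𝓗 →L[ℂ] 𝓗) : ℝ :=
  sInf {c : ℝ | ∃ A B : 𝓗 →L[ℂ] 𝓗, IsHS e A ∧ IsHS e B ∧ T = A * B ∧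
    c = hsNorm e A * hsNorm e B}

open Filter Topology ContinuousLinearMap
open scoped ENNReal InnerProductSpace

namespace spectrum

section Algebra

variable {R A : Type*} [CommRing R] [Ring A] [Algebra R A] {a : A} {r s : R}

theorem resolvent_mul_algebraMap_sub (h : r ∈ resolventSet R a) :
    resolvent a r * (algebraMap R A r - a) = 1 :=
  Ring.inverse_mul_cancel _ h

theorem algebraMap_sub_mul_resolvent (h : r ∈ resolventSet R a) :
    (algebraMap R A r - a) * resolvent a r = 1 :=
  Ring.mul_inverse_cancel _ h

theorem mul_eq_mul_resolvent_mul (h : r ∈ resolventSet R a) (x y : A) :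
    x * y = x * resolvent a r * ((algebraMap R A r - a) * y) := by
  rw [mul_assoc x, ← mul_assoc (resolvent a r), resolvent_mul_algebraMap_sub h, one_mul]

theorem resolvent_sub_resolvent_eq_smul_mul (hr : r ∈ resolventSet R a)
    (hs : s ∈ resolventSet R a) :
    resolvent a r - resolvent a s = (s - r) • (resolvent a r * resolvent a s) := by
  calc resolvent a r - resolvent a s
      = resolvent a r * ((algebraMap R A s - a) - (algebraMap R A r - a)) * resolvent a s := by
        rw [mul_sub, sub_mul, mul_assoc, algebraMap_sub_mul_resolvent hs,
          resolvent_mul_algebraMap_sub hr, mul_one, one_mul]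
    _ = (s - r) • (resolvent a r * resolvent a s) := by
        rw [sub_sub_sub_cancel_right, ← map_sub, Algebra.algebraMap_eq_smul_one, mul_smul_comm,
          mul_one, smul_mul_assoc]

theorem star_resolvent [StarRing R] [StarRing A] [StarModule R A] (a : A) (r : R) :
    star (resolvent a r) = resolvent (star a) (star r) := by
  rw [resolvent, resolvent, ← Ring.inverse_star, star_sub, algebraMap_star_comm]

end Algebra

theorem sandwich_resolvent_diffQuot_sub {𝕜 A : Type*} [Field 𝕜] [Ring A] [Algebra 𝕜 A]
    {a : A} {z w : 𝕜} (hz : z ∈ resolventSet 𝕜 a) (hw : w ∈ resolventSet 𝕜 a) (hne : w ≠ z)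
    (x y : A) :
    (z - w)⁻¹ • (x * resolvent a w * y - x * resolvent a z * y)
        - x * resolvent a z * resolvent a z * y
      = x * resolvent a z * ((z - w) • resolvent a w) * (resolvent a z * y) := by
  have hzw : z - w ≠ 0 := sub_ne_zero.mpr hne.symm
  have h₁ : resolvent a w - resolvent a z = (z - w) • (resolvent a w * resolvent a z) :=
    resolvent_sub_resolvent_eq_smul_mul hw hz
  have h₂ : resolvent a w - resolvent a z = (z - w) • (resolvent a z * resolvent a w) := by
    rw [← neg_sub, resolvent_sub_resolvent_eq_smul_mul hz hw, ← neg_smul, neg_sub]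
  calc (z - w)⁻¹ • (x * resolvent a w * y - x * resolvent a z * y)
        - x * resolvent a z * resolvent a z * y
      = x * ((z - w)⁻¹ • (resolvent a w - resolvent a z)) * y
        - x * resolvent a z * resolvent a z * y := by
        rw [mul_smul_comm, smul_mul_assoc, mul_sub, sub_mul]
    _ = x * (resolvent a w * resolvent a z) * y - x * resolvent a z * resolvent a z * y := by
        rw [h₁, smul_smul, inv_mul_cancel₀ hzw, one_smul]
    _ = x * (resolvent a w - resolvent a z) * (resolvent a z * y) := by noncomm_ring
    _ = x * resolvent a z * ((z - w) • resolvent a w) * (resolvent a z * y) := by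
        rw [h₂]; simp only [mul_smul_comm, smul_mul_assoc, mul_assoc]

theorem tendsto_sub_smul_resolvent {𝕜 A : Type*} [NontriviallyNormedField 𝕜] [NormedRing A]
    [NormedAlgebra 𝕜 A] [CompleteSpace A] {a : A} {z : 𝕜} (hz : z ∈ resolventSet 𝕜 a) :
    Tendsto (fun w => (z - w) • resolvent a w) (𝓝 z) (𝓝 0) := by
  have h : ContinuousAt (fun w => (z - w) • resolvent a w) z :=
    (continuousAt_const.sub continuousAt_id).smul (hasDerivAt_resolvent_const_left hz).continuousAt
  simpa using h.tendsto

end spectrum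

section InnerProductSpace

variable {ι κ 𝕜 E F : Type*} [RCLike 𝕜] [NormedAddCommGroup E] [InnerProductSpace 𝕜 E]
  [NormedAddCommGroup F] [InnerProductSpace 𝕜 F]

theorem HilbertBasis.hasSum_norm_inner_sq (b : HilbertBasis ι 𝕜 E) (x : E) :
    HasSum (fun i => ‖⟪b i, x⟫_𝕜‖ ^ 2) (‖x‖ ^ 2) := by
  have h := lp.hasSum_norm (p := 2) (by norm_num) (b.repr x)
  simp only [ENNReal.toReal_ofNat, Real.rpow_ofNat, b.repr_apply_apply,
    LinearIsometryEquiv.norm_map] at h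
  exact h

theorem HilbertBasis.enorm_sq_eq_tsum (b : HilbertBasis ι 𝕜 E) (x : E) :
    ‖x‖ₑ ^ 2 = ∑' i, ‖⟪b i, x⟫_𝕜‖ₑ ^ 2 := by
  simp only [← ofReal_norm, ← ENNReal.ofReal_pow (norm_nonneg _)]
  rw [← (b.hasSum_norm_inner_sq x).tsum_eq,
    ENNReal.ofReal_tsum_of_nonneg (fun _ => by positivity) (b.hasSum_norm_inner_sq x).summable]

theorem HilbertBasis.tsum_enorm_adjoint_apply_sq [CompleteSpace E] [CompleteSpace F]
    (b : HilbertBasis ι 𝕜 E) (c : HilbertBasis κ 𝕜 F) (T : E →L[𝕜] F) :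
    ∑' j, ‖adjoint T (c j)‖ₑ ^ 2 = ∑' i, ‖T (b i)‖ₑ ^ 2 := by
  have h : ∀ i j, ‖⟪b i, adjoint T (c j)⟫_𝕜‖ₑ = ‖⟪c j, T (b i)⟫_𝕜‖ₑ := fun i j => by
    rw [adjoint_inner_right, ← inner_conj_symm, RCLike.enorm_conj]
  simp only [b.enorm_sq_eq_tsum, c.enorm_sq_eq_tsum, h]
  exact ENNReal.tsum_comm

theorem ContinuousLinearMap.norm_apply_sq_le (C : E →L[𝕜] F) (x : E) :
    ‖C x‖ ^ 2 ≤ ‖C‖ ^ 2 * ‖x‖ ^ 2 := by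
  rw [← mul_pow]
  exact pow_le_pow_left₀ (norm_nonneg _) (C.le_opNorm x) 2

end InnerProductSpace

section HilbertSchmidt

variable {𝓗 : Type*} [NormedAddCommGroup 𝓗] [InnerProductSpace ℂ 𝓗] {e : HilbertBasis ℕ ℂ 𝓗}
  {A B T : 𝓗 →L[ℂ] 𝓗}

theorem isHS_iff_tsum_enorm_sq_ne_top : IsHS e T ↔ ∑' n, ‖T (e n)‖ₑ ^ 2 ≠ ∞ := by
  simp only [← ofReal_norm, ← ENNReal.ofReal_pow (norm_nonneg _)]
  refine ⟨Summable.tsum_ofReal_ne_top, fun h => ?_⟩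
  have := ENNReal.summable_toReal h
  simp only [ENNReal.toReal_ofReal (sq_nonneg _)] at this
  exact this

theorem IsHS.star [CompleteSpace 𝓗] (h : IsHS e T) : IsHS e (star T) := by
  rw [isHS_iff_tsum_enorm_sq_ne_top] at h ⊢
  rwa [star_eq_adjoint, e.tsum_enorm_adjoint_apply_sq e]

theorem IsHS.mul_left (h : IsHS e T) (C : 𝓗 →L[ℂ] 𝓗) : IsHS e (C * T) :=
  .of_nonneg_of_le (fun _ => by positivity) (fun n => C.norm_apply_sq_le (T (e n)))
    (Summable.mul_left (‖C‖ ^ 2) h)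

theorem IsHS.mul_right [CompleteSpace 𝓗] (h : IsHS e T) (C : 𝓗 →L[ℂ] 𝓗) : IsHS e (T * C) := by
  simpa [star_mul] using (h.star.mul_left (Star.star C)).star

theorem hsNorm_nonneg (e : HilbertBasis ℕ ℂ 𝓗) (T : 𝓗 →L[ℂ] 𝓗) : 0 ≤ hsNorm e T :=
  Real.sqrt_nonneg _

theorem hsNorm_mul_le (h : IsHS e T) (C : 𝓗 →L[ℂ] 𝓗) : hsNorm e (C * T) ≤ ‖C‖ * hsNorm e T := by
  rw [hsNorm, hsNorm, ← Real.sqrt_sq (norm_nonneg C), ← Real.sqrt_mul (by positivity),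
    ← tsum_mul_left]
  exact Real.sqrt_le_sqrt <| (h.mul_left C).tsum_le_tsum
    (fun n => C.norm_apply_sq_le (T (e n))) (Summable.mul_left _ h)

theorem traceNorm_nonneg (e : HilbertBasis ℕ ℂ 𝓗) (T : 𝓗 →L[ℂ] 𝓗) : 0 ≤ traceNorm e T := by
  apply Real.sInf_nonneg
  rintro _ ⟨A, B, -, -, -, rfl⟩
  exact mul_nonneg (hsNorm_nonneg e A) (hsNorm_nonneg e B)

theorem traceNorm_mul_le (hA : IsHS e A) (hB : IsHS e B) :
    traceNorm e (A * B) ≤ hsNorm e A * hsNorm e B := by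
  refine csInf_le ⟨0, ?_⟩ ⟨A, B, hA, hB, rfl, rfl⟩
  rintro _ ⟨A', B', -, -, -, rfl⟩
  exact mul_nonneg (hsNorm_nonneg e A') (hsNorm_nonneg e B')

theorem tendsto_traceNorm_mul_mul {α : Type*} {l : Filter α} {C : α → 𝓗 →L[ℂ] 𝓗}
    (hA : IsHS e A) (hB : IsHS e B) (hC : Tendsto C l (𝓝 0)) :
    Tendsto (fun x => traceNorm e (A * C x * B)) l (𝓝 0) := by
  have hbound : Tendsto (fun x => hsNorm e A * (‖C x‖ * hsNorm e B)) l (𝓝 0) := by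
    simpa using (hC.norm.mul_const (hsNorm e B)).const_mul (hsNorm e A)
  refine squeeze_zero (fun x => traceNorm_nonneg e _) (fun x => ?_) hbound
  calc traceNorm e (A * C x * B) ≤ hsNorm e A * hsNorm e (C x * B) := by
        rw [mul_assoc]; exact traceNorm_mul_le hA (hB.mul_left _)
    _ ≤ hsNorm e A * (‖C x‖ * hsNorm e B) :=
        mul_le_mul_of_nonneg_left (hsNorm_mul_le hB _) (hsNorm_nonneg e A)

variable [CompleteSpace 𝓗] {H S : 𝓗 →L[ℂ] 𝓗} {z₀ : ℂ}

theorem isHS_mul_resolvent (hz₀ : z₀ ∈ resolventSet ℂ H) (h₀ : IsHS e (S * resolvent H z₀))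
    (w : ℂ) : IsHS e (S * resolvent H w) := by
  rw [spectrum.mul_eq_mul_resolvent_mul hz₀]
  exact h₀.mul_right _

theorem isHS_resolvent_mul (hH : IsSelfAdjoint H) (hS : IsSelfAdjoint S)
    (hz₀ : z₀ ∈ resolventSet ℂ H) (h₀ : IsHS e (S * resolvent H z₀)) (w : ℂ) :
    IsHS e (resolvent H w * S) := by
  have h : resolvent H w * S = star (S * resolvent H (star w)) := by
    rw [star_mul, spectrum.star_resolvent, hH.star_eq, hS.star_eq, star_star]
  exact h ▸ (isHS_mul_resolvent hz₀ h₀ _).star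

end HilbertSchmidt

theorem stmt3_general {𝓗 : Type*} [NormedAddCommGroup 𝓗] [InnerProductSpace ℂ 𝓗] [CompleteSpace 𝓗]
    (H sqrtV : 𝓗 →L[ℂ] 𝓗)
    (hH : IsSelfAdjoint H) (hsV : IsSelfAdjoint sqrtV)
    (e : HilbertBasis ℕ ℂ 𝓗)
    (z₀ : ℂ) (hz₀ : z₀ ∈ resolventSet ℂ H)
    (h0 : IsHS e (sqrtV * resolvent H z₀)) :
    ∀ z ∈ resolventSet ℂ H,
      IsTraceClass e (sqrtV * resolvent H z * sqrtV) ∧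
      Filter.Tendsto
        (fun w : ℂ => traceNorm e ((z - w)⁻¹ •
            (sqrtV * resolvent H w * sqrtV - sqrtV * resolvent H z * sqrtV)
          - sqrtV * resolvent H z * resolvent H z * sqrtV))
        (nhdsWithin z (resolventSet ℂ H \ {z})) (nhds 0) := by
  intro z hz
  have hleft := isHS_mul_resolvent hz₀ h0 z
  have hright := isHS_resolvent_mul hH hsV hz₀ h0 z
  refine ⟨?_, ?_⟩
  · rw [mul_assoc, spectrum.mul_eq_mul_resolvent_mul hz₀]
    exact ⟨_, _, h0, hright.mul_left _, rfl⟩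
  · have hlim := tendsto_traceNorm_mul_mul hleft hright (spectrum.tendsto_sub_smul_resolvent hz)
    refine (hlim.mono_left nhdsWithin_le_nhds).congr' ?_
    filter_upwards [self_mem_nhdsWithin] with w ⟨hw, hne⟩
    exact congrArg (traceNorm e) (spectrum.sandwich_resolvent_diffQuot_sub hz hw hne _ _).symm

/-- If `√|V| R(z₀)` is Hilbert–Schmidt and `√|V| R(z₀) √|V|` is trace class for
some `z₀` in the resolvent set of `H`, then `√|V| R(z) √|V|` is trace class for all `z` in the
resolvent set and `z ↦ √|V| R(z) √|V|` is holomorphic in trace norm, the difference quotient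
`(√|V| R(w) √|V| − √|V| R(z) √|V|)/(z − w)` converging to `√|V| R(z)² √|V|`. -/
theorem stmt3 {𝓗 : Type*} [NormedAddCommGroup 𝓗] [InnerProductSpace ℂ 𝓗] [CompleteSpace 𝓗]
    (H V sqrtV J : 𝓗 →L[ℂ] 𝓗)
    (hH : IsSelfAdjoint H) (hV : IsSelfAdjoint V) (hsV : IsSelfAdjoint sqrtV)
    (hJ : IsSelfAdjoint J) (hJ2 : J * J = 1) (hfac : V = sqrtV * J * sqrtV)
    (e : HilbertBasis ℕ ℂ 𝓗)
    (z₀ : ℂ) (hz₀ : z₀ ∈ resolventSet ℂ H)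
    (h0 : IsHS e (sqrtV * resolvent H z₀))
    (h1 : IsTraceClass e (sqrtV * resolvent H z₀ * sqrtV)) :
    ∀ z ∈ resolventSet ℂ H,
      IsTraceClass e (sqrtV * resolvent H z * sqrtV) ∧
      Filter.Tendsto
        (fun w : ℂ => traceNorm e ((z - w)⁻¹ •
            (sqrtV * resolvent H w * sqrtV - sqrtV * resolvent H z * sqrtV)
          - sqrtV * resolvent H z * resolvent H z * sqrtV))
        (nhdsWithin z (resolventSet ℂ H \ {z})) (nhds 0) :=
  stmt3_general H sqrtV hH hsV e z₀ hz₀ h0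
end

section
/- Let V ∈ L¹(ℝ) with X^{α}V ∈ L¹(ℝ), α ≥ 0, and b > 0. Then L^α ∫₀^b s^α e^{−Ls} 𝒱_L(s) ds → 0 as L → ∞, where 𝒱_L(s) = ∫_{−L}^{L} |V(x)| e^{s|x|} dx. -/
/-
For `|x| ≤ L/2` the weight `e^{s|x|}` is at most `e^{sL/2}`, and on `L/2 ≤ |x| ≤ L` it is at most
`e^{sL} (2|x|/L)^α`. Hence
`𝒱_L(s) ≤ e^{sL/2} ‖V‖₁ + e^{sL} (2/L)^α T(L/2)` with `T(R) = ∫_{|x| ≥ R} |x|^α |V(x)| dx`.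
The first term gains the factor `e^{-sL/2}` against `e^{-Ls}`, so it contributes at most
`L^α ‖V‖₁ Γ(α+1) (2/L)^{α+1} = O(1/L)`; the second contributes `2^α (∫₀^b s^α ds) T(L/2)`,
which tends to `0` because `|x|^α V` is integrable.
-/

open MeasureTheory Filter Topology Set Real

lemma tendsto_setIntegral_le_abs_atTop {E : Type*} [NormedAddCommGroup E] [NormedSpace ℝ E]
    {g : ℝ → E} (hg : Integrable g) :
    Tendsto (fun R : ℝ => ∫ x in {x | R ≤ |x|}, g x) atTop (𝓝 0) := by
  have hempty : ⋂ R : ℝ, {x : ℝ | R ≤ |x|} = ∅ :=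
    eq_empty_of_forall_notMem fun x hx => by
      have : |x| + 1 ≤ |x| := mem_iInter.1 hx (|x| + 1)
      linarith
  simpa [hempty] using tendsto_setIntegral_of_antitone (s := fun R : ℝ => {x : ℝ | R ≤ |x|})
    (fun R => measurableSet_le measurable_const measurable_abs)
    (fun R R' h x hx => h.trans hx) ⟨0, hg.integrableOn⟩

lemma integrableOn_rpow_mul_exp_neg_mul_Ioi {α a : ℝ} (hα : -1 < α) (ha : 0 < a) :
    IntegrableOn (fun s => s ^ α * exp (-a * s)) (Ioi 0) := by
  simpa only [rpow_one] using integrableOn_rpow_mul_exp_neg_mul_rpow hα one_pos ha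

lemma setIntegral_Ioc_rpow_mul_exp_neg_mul_le {α a : ℝ} (hα : -1 < α) (ha : 0 < a) (b : ℝ) :
    ∫ s in Ioc 0 b, s ^ α * exp (-a * s) ≤ (1 / a) ^ (α + 1) * Gamma (α + 1) :=
  calc ∫ s in Ioc 0 b, s ^ α * exp (-a * s)
      ≤ ∫ s in Ioi 0, s ^ α * exp (-a * s) := by
        refine setIntegral_mono_set (integrableOn_rpow_mul_exp_neg_mul_Ioi hα ha) ?_
          Ioc_subset_Ioi_self.eventuallyLE
        filter_upwards [ae_restrict_mem measurableSet_Ioi] with s hs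
        exact mul_nonneg (rpow_nonneg (le_of_lt hs) _) (exp_nonneg _)
    _ = (1 / a) ^ (α + 1) * Gamma (α + 1) := by
        simpa only [add_sub_cancel_right, neg_mul] using
          integral_rpow_mul_exp_neg_mul_Ioi (by linarith : 0 < α + 1) ha

lemma mul_exp_mul_abs_le_add_indicator {f : ℝ → ℝ} {α s L x : ℝ} (hα : 0 ≤ α) (hf : 0 ≤ f x)
    (hs : 0 ≤ s) (hL : 0 < L) (hx : |x| ≤ L) :
    f x * exp (s * |x|) ≤ exp (s * (L / 2)) * f x +
      exp (s * L) * (2 / L) ^ α * {x : ℝ | L / 2 ≤ |x|}.indicator (fun x => |x| ^ α * f x) x := by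
  by_cases hxL : L / 2 ≤ |x|
  · have hweight : 1 ≤ (2 / L) ^ α * |x| ^ α := by
      rw [← mul_rpow (by positivity) (abs_nonneg x)]
      exact one_le_rpow (by rw [div_mul_eq_mul_div, le_div_iff₀ hL]; linarith) hα
    rw [indicator_of_mem (show x ∈ {x : ℝ | L / 2 ≤ |x|} from hxL)]
    calc f x * exp (s * |x|) ≤ f x * exp (s * L) := by gcongr
      _ ≤ ((2 / L) ^ α * |x| ^ α) * (f x * exp (s * L)) :=
        le_mul_of_one_le_left (by positivity) hweight
      _ = exp (s * L) * (2 / L) ^ α * (|x| ^ α * f x) := by ring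
      _ ≤ _ := le_add_of_nonneg_left (by positivity)
  · rw [indicator_of_notMem (show x ∉ {x : ℝ | L / 2 ≤ |x|} from hxL), mul_zero, add_zero, mul_comm]
    gcongr
    exact (not_le.1 hxL).le

section

variable {f : ℝ → ℝ} {α : ℝ}

lemma rpow_mul_exp_mul_setIntegral_nonneg (hf : 0 ≤ f) {s : ℝ} (hs : 0 ≤ s) (L : ℝ) :
    0 ≤ s ^ α * exp (-L * s) * ∫ x in Icc (-L) L, f x * exp (s * |x|) :=
  mul_nonneg (mul_nonneg (rpow_nonneg hs α) (exp_nonneg _))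
    (setIntegral_nonneg measurableSet_Icc fun x _ => mul_nonneg (hf x) (exp_nonneg _))

lemma setIntegral_Icc_mul_exp_abs_le (hα : 0 ≤ α) (hf : 0 ≤ f) (hfi : Integrable f)
    (hxf : Integrable fun x => |x| ^ α * f x) {s L : ℝ} (hs : 0 ≤ s) (hL : 0 < L) :
    ∫ x in Icc (-L) L, f x * exp (s * |x|) ≤
      exp (s * (L / 2)) * (∫ x, f x) +
        exp (s * L) * (2 / L) ^ α * ∫ x in {x | L / 2 ≤ |x|}, |x| ^ α * f x := by
  set tail : Set ℝ := {x | L / 2 ≤ |x|}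
  have htail : MeasurableSet tail := measurableSet_le measurable_const measurable_abs
  set g : ℝ → ℝ := fun x =>
    exp (s * (L / 2)) * f x + exp (s * L) * (2 / L) ^ α * tail.indicator (fun x => |x| ^ α * f x) x
  have hg : Integrable g := (hfi.const_mul _).add ((hxf.indicator htail).const_mul _)
  have hg_nonneg : 0 ≤ g := fun x =>
    add_nonneg (mul_nonneg (exp_nonneg _) (hf x)) (mul_nonneg (by positivity)
      (indicator_nonneg (fun y _ => mul_nonneg (rpow_nonneg (abs_nonneg y) α) (hf y)) x))
  calc ∫ x in Icc (-L) L, f x * exp (s * |x|)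
      ≤ ∫ x in Icc (-L) L, g x :=
        integral_mono_of_nonneg (ae_of_all _ fun x => mul_nonneg (hf x) (exp_nonneg _))
          hg.integrableOn (ae_restrict_of_forall_mem measurableSet_Icc fun x hx =>
            mul_exp_mul_abs_le_add_indicator hα (hf x) hs hL (abs_le.2 hx))
    _ ≤ ∫ x, g x := setIntegral_le_integral hg (ae_of_all _ hg_nonneg)
    _ = _ := by
      rw [integral_add (hfi.const_mul _) ((hxf.indicator htail).const_mul _), integral_const_mul,
        integral_const_mul, integral_indicator htail]

lemma rpow_mul_setIntegral_Ioc_le (hα : 0 ≤ α) (hf : 0 ≤ f) (hfi : Integrable f)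
    (hxf : Integrable fun x => |x| ^ α * f x) (b : ℝ) {L : ℝ} (hL : 0 < L) :
    L ^ α * ∫ s in Ioc 0 b, s ^ α * exp (-L * s) * ∫ x in Icc (-L) L, f x * exp (s * |x|) ≤
      2 ^ (α + 1) * Gamma (α + 1) * (∫ x, f x) / L +
        2 ^ α * (∫ s in Ioc 0 b, s ^ α) * ∫ x in {x | L / 2 ≤ |x|}, |x| ^ α * f x := by
  set A := ∫ x, f x
  set T := ∫ x in {x | L / 2 ≤ |x|}, |x| ^ α * f x
  have hA : 0 ≤ A := integral_nonneg hf
  have hT : 0 ≤ T := setIntegral_nonneg (measurableSet_le measurable_const measurable_abs)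
    fun x _ => mul_nonneg (rpow_nonneg (abs_nonneg x) α) (hf x)
  have hexp : IntegrableOn (fun s => s ^ α * exp (-(L / 2) * s)) (Ioc 0 b) :=
    (integrableOn_rpow_mul_exp_neg_mul_Ioi (by linarith) (half_pos hL)).mono_set
      Ioc_subset_Ioi_self
  have hpow : IntegrableOn (fun s => s ^ α) (Ioc 0 b) :=
    (intervalIntegral.intervalIntegrable_rpow' (by linarith)).1
  have houter : ∫ s in Ioc 0 b, s ^ α * exp (-L * s) * ∫ x in Icc (-L) L, f x * exp (s * |x|) ≤
      (∫ s in Ioc 0 b, s ^ α * exp (-(L / 2) * s)) * A +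
        (∫ s in Ioc 0 b, s ^ α) * ((2 / L) ^ α * T) := by
    rw [← integral_mul_const, ← integral_mul_const,
      ← integral_add (hexp.mul_const _) (hpow.mul_const _)]
    refine integral_mono_of_nonneg (ae_restrict_of_forall_mem measurableSet_Ioc fun s hs => ?_)
      ((hexp.mul_const _).add (hpow.mul_const _))
      (ae_restrict_of_forall_mem measurableSet_Ioc fun s hs => ?_)
    · exact rpow_mul_exp_mul_setIntegral_nonneg hf hs.1.le L
    · have e₁ : exp (-L * s) * exp (s * (L / 2)) = exp (-(L / 2) * s) := by
        rw [← exp_add]; ring_nf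
      have e₂ : exp (-L * s) * exp (s * L) = 1 := by
        rw [← exp_add, ← exp_zero]; ring_nf
      obtain ⟨hs₀, -⟩ := hs
      calc s ^ α * exp (-L * s) * ∫ x in Icc (-L) L, f x * exp (s * |x|)
          ≤ s ^ α * exp (-L * s) * (exp (s * (L / 2)) * A + exp (s * L) * (2 / L) ^ α * T) := by
            gcongr
            exact setIntegral_Icc_mul_exp_abs_le hα hf hfi hxf hs₀.le hL
        _ = _ := by linear_combination (s ^ α * A) * e₁ + (s ^ α * ((2 / L) ^ α * T)) * e₂
  have hgamma := setIntegral_Ioc_rpow_mul_exp_neg_mul_le (α := α) (by linarith) (half_pos hL) b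
  calc L ^ α * ∫ s in Ioc 0 b, s ^ α * exp (-L * s) * ∫ x in Icc (-L) L, f x * exp (s * |x|)
      ≤ L ^ α * ((1 / (L / 2)) ^ (α + 1) * Gamma (α + 1) * A +
          (∫ s in Ioc 0 b, s ^ α) * ((2 / L) ^ α * T)) := by
        gcongr
        exact houter.trans (by gcongr)
    _ = _ := by
      rw [one_div_div, div_rpow zero_le_two hL.le, div_rpow zero_le_two hL.le,
        rpow_add_one hL.ne']
      field_simp

end

theorem stmt12_general (V : ℝ → ℂ) (α : ℝ) (hα : 0 ≤ α) (b : ℝ)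
    (hV : Integrable V)
    (hXV : Integrable (fun x => |x| ^ α * ‖V x‖)) :
    Filter.Tendsto
      (fun L : ℝ => L ^ α *
        ∫ s in Set.Ioc (0:ℝ) b, s ^ α * Real.exp (-L * s) *
          ∫ x in Set.Icc (-L) L, ‖V x‖ * Real.exp (s * |x|))
      Filter.atTop (nhds 0) := by
  have hbound : Tendsto (fun L => 2 ^ (α + 1) * Gamma (α + 1) * (∫ x, ‖V x‖) / L +
      2 ^ α * (∫ s in Ioc 0 b, s ^ α) * ∫ x in {x | L / 2 ≤ |x|}, |x| ^ α * ‖V x‖)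
      atTop (𝓝 0) := by
    have hhead := tendsto_const_nhds (x := 2 ^ (α + 1) * Gamma (α + 1) * ∫ x, ‖V x‖).div_atTop
      tendsto_id
    have htail := (tendsto_setIntegral_le_abs_atTop hXV).comp
      (tendsto_id.atTop_div_const two_pos)
    simpa using hhead.add (htail.const_mul (2 ^ α * ∫ s in Ioc 0 b, s ^ α))
  refine squeeze_zero' ?_ ((eventually_gt_atTop 0).mono fun L hL =>
    rpow_mul_setIntegral_Ioc_le hα (fun x => norm_nonneg (V x)) hV.norm hXV b hL) hbound
  filter_upwards [eventually_ge_atTop 0] with L hL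
  exact mul_nonneg (rpow_nonneg hL α) (setIntegral_nonneg measurableSet_Ioc fun s hs =>
    rpow_mul_exp_mul_setIntegral_nonneg (fun x => norm_nonneg (V x)) hs.1.le L)

/-- For `V ∈ L¹(ℝ)` with `∫ |x|^α |V(x)| dx < ∞` (`α ≥ 0`), `b > 0`, and
`𝒱_L(s) = ∫_{−L}^L |V(x)| e^{s|x|} dx`, one has
`L^α ∫₀^b s^α e^{−Ls} 𝒱_L(s) ds → 0` as `L → ∞`. -/
theorem stmt12 (V : ℝ → ℂ) (α : ℝ) (hα : 0 ≤ α) (b : ℝ) (hb : 0 < b)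
    (hV : Integrable V)
    (hXV : Integrable (fun x => |x| ^ α * ‖V x‖)) :
    Filter.Tendsto
      (fun L : ℝ => L ^ α *
        ∫ s in Set.Ioc (0:ℝ) b, s ^ α * Real.exp (-L * s) *
          ∫ x in Set.Icc (-L) L, ‖V x‖ * Real.exp (s * |x|))
      Filter.atTop (nhds 0) :=
  stmt12_general V α hα b hV hXV
end

section
/- Let V ∈ L¹(ℝ) and k ∈ ℂ with Im(k) ≥ 0, k ≠ 0. Then the modified Lippmann–Schwinger equation m(x) = 1 + ∫ₓ^∞ D_k(y − x) V(y) m(y) dy with D_k(t) = (e^{2ikt} − 1)/(2ik) has a unique bounded solution m = m₊(k; ·) satisfying |m₊(k;x) − 1| ≤ exp( |k|^{−1} ∫ₓ^∞ |V(y)| dy ) − 1 for all x ∈ ℝ; in particular |m₊(k;x)| ≤ exp(‖V‖₁/|k|). -/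
/-!
Put `g = |V|/|k|` and `T(x) = ∫ₓ^∞ g`. Since `|D_k(t)| ≤ 1/|k|` for `t ≥ 0`, the kernel
`K(x, y) = D_k(y - x) V(y)` is dominated by `g(y)` for `y > x`. The tail `T` is absolutely
continuous with `T' = -g`, so `∫ₓ^∞ g Tⁿ = T(x)ⁿ⁺¹/(n + 1)`, and by induction the Picard
iterates `u₀ = 1`, `uₙ₊₁(x) = ∫ₓ^∞ K(x, y) uₙ(y) dy` satisfy `|uₙ(x)| ≤ T(x)ⁿ/n!`. Hence
`m = Σ uₙ` converges, solves the equation and satisfies `|m - 1| ≤ Σ_{n ≥ 1} Tⁿ/n! = e^T - 1`.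
The same induction bounds the difference of two bounded solutions by `C Tⁿ/n! → 0`.
-/

open MeasureTheory

/-- The kernel `D_k(t) = ∫₀^t e^{2iks} ds = (e^{2ikt} − 1)/(2ik)` (equal to `t` for `k = 0`). -/
noncomputable def Dker (k : ℂ) (t : ℝ) : ℂ :=
  ∫ s in (0:ℝ)..t, Complex.exp (2 * Complex.I * k * s)

open Set Filter Topology
open scoped Nat

section Kernel

variable {k : ℂ}

theorem dker_eq (hk0 : k ≠ 0) (t : ℝ) :
    Dker k t = (Complex.exp (2 * Complex.I * k * t) - 1) / (2 * Complex.I * k) := by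
  simpa [Dker] using integral_exp_mul_complex (a := 0) (b := t)
    (mul_ne_zero (mul_ne_zero two_ne_zero Complex.I_ne_zero) hk0)

theorem continuous_dker (k : ℂ) : Continuous (Dker k) := by
  have : Continuous fun s : ℝ => Complex.exp (2 * Complex.I * k * s) := by fun_prop
  exact intervalIntegral.continuous_primitive (fun _ _ => this.intervalIntegrable _ _) 0

theorem norm_dker_le (hk : 0 ≤ k.im) (hk0 : k ≠ 0) {t : ℝ} (ht : 0 ≤ t) :
    ‖Dker k t‖ ≤ ‖k‖⁻¹ := by
  have hexp : ‖Complex.exp (2 * Complex.I * k * t)‖ ≤ 1 := by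
    have hre : (2 * Complex.I * k * t).re = -(2 * k.im * t) := by simp [Complex.mul_re]
    rw [Complex.norm_exp, Real.exp_le_one_iff, hre, neg_nonpos]
    positivity
  rw [dker_eq hk0, norm_div, div_le_iff₀ (by simp [hk0])]
  calc ‖Complex.exp (2 * Complex.I * k * t) - 1‖
      ≤ ‖Complex.exp (2 * Complex.I * k * t)‖ + ‖(1 : ℂ)‖ := norm_sub_le _ _
    _ ≤ 2 := by rw [norm_one]; linarith
    _ = ‖k‖⁻¹ * ‖2 * Complex.I * k‖ := by
      simp only [norm_mul, Complex.norm_ofNat, Complex.norm_I]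
      field_simp

end Kernel

theorem AbsolutelyContinuousOnInterval.fun_pow {f : ℝ → ℝ} {a b : ℝ}
    (hf : AbsolutelyContinuousOnInterval f a b) (n : ℕ) :
    AbsolutelyContinuousOnInterval (fun x => f x ^ n) a b := by
  induction n with
  | zero => simpa using (LipschitzWith.const 1).lipschitzOnWith.absolutelyContinuousOnInterval
  | succ n ih => simpa only [← pow_succ] using ih.fun_mul hf

noncomputable def tailIntegral (g : ℝ → ℝ) (x : ℝ) : ℝ := ∫ y in Ioi x, g y

section TailIntegral

variable {g : ℝ → ℝ}

theorem tailIntegral_eq_sub (hg : Integrable g) (a y : ℝ) :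
    tailIntegral g y = tailIntegral g a - ∫ t in a..y, g t := by
  rw [← intervalIntegral.integral_Ioi_sub_Ioi' hg.integrableOn hg.integrableOn, tailIntegral,
    tailIntegral, sub_sub_cancel]

theorem continuous_tailIntegral (hg : Integrable g) : Continuous (tailIntegral g) := by
  rw [funext (tailIntegral_eq_sub hg 0)]
  exact continuous_const.sub
    (intervalIntegral.continuous_primitive (fun _ _ => hg.intervalIntegrable) 0)

theorem tendsto_tailIntegral_atTop : Tendsto (tailIntegral g) atTop (𝓝 0) :=
  tendsto_integral_Ioi_zero tendsto_id

theorem norm_tailIntegral_le (hg : Integrable g) (x : ℝ) :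
    ‖tailIntegral g x‖ ≤ ∫ y, ‖g y‖ :=
  (norm_integral_le_integral_norm _).trans
    (setIntegral_le_integral hg.norm (Eventually.of_forall fun _ => norm_nonneg _))

theorem ae_hasDerivAt_tailIntegral (hg : Integrable g) :
    ∀ᵐ y, HasDerivAt (tailIntegral g) (-g y) y := by
  filter_upwards [LocallyIntegrable.ae_hasDerivAt_integral hg.locallyIntegrable] with y hy
  rw [funext (tailIntegral_eq_sub hg 0)]
  exact (hy 0).const_sub _

theorem absolutelyContinuousOnInterval_tailIntegral (hg : Integrable g) (a b : ℝ) :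
    AbsolutelyContinuousOnInterval (tailIntegral g) a b := by
  rw [funext (tailIntegral_eq_sub hg a)]
  exact (LipschitzWith.const _).lipschitzOnWith.absolutelyContinuousOnInterval.sub
    (hg.intervalIntegrable.absolutelyContinuousOnInterval_intervalIntegral left_mem_uIcc)

theorem integrable_mul_tailIntegral_pow (hg : Integrable g) (n : ℕ) :
    Integrable fun y => g y * tailIntegral g y ^ n :=
  hg.mul_bdd ((continuous_tailIntegral hg).pow n).aestronglyMeasurable
    (Eventually.of_forall fun y => by
      rw [norm_pow]; exact pow_le_pow_left₀ (norm_nonneg _) (norm_tailIntegral_le hg y) n)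

theorem integral_mul_tailIntegral_pow (hg : Integrable g) (n : ℕ) (x : ℝ) :
    ∫ y in Ioi x, g y * tailIntegral g y ^ n = tailIntegral g x ^ (n + 1) / (n + 1) := by
  set T := tailIntegral g
  have hFTC : ∀ b, ∫ y in x..b, g y * T y ^ n = (T x ^ (n + 1) - T b ^ (n + 1)) / (n + 1) := by
    intro b
    have hAC := (absolutelyContinuousOnInterval_tailIntegral hg x b).fun_pow (n + 1)
    rw [eq_div_iff (by positivity), ← neg_sub, ← hAC.integral_deriv_eq_sub,
      ← intervalIntegral.integral_mul_const, ← intervalIntegral.integral_neg]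
    refine intervalIntegral.integral_congr_ae ?_
    filter_upwards [ae_hasDerivAt_tailIntegral hg] with y hy _
    rw [(hy.fun_pow (n + 1)).deriv]
    push_cast
    ring
  refine tendsto_nhds_unique (intervalIntegral_tendsto_integral_Ioi x
    (integrable_mul_tailIntegral_pow hg n).integrableOn tendsto_id) ?_
  simp_rw [id, hFTC]
  simpa using ((tendsto_tailIntegral_atTop.pow (n + 1)).const_sub (T x ^ (n + 1))).div_const
    ((n : ℝ) + 1)

end TailIntegral

noncomputable def volterraOp (K : ℝ → ℝ → ℂ) (u : ℝ → ℂ) (x : ℝ) : ℂ :=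
  ∫ y in Ioi x, K x y * u y

noncomputable def volterraIter (K : ℝ → ℝ → ℂ) (n : ℕ) : ℝ → ℂ :=
  (volterraOp K)^[n] 1

noncomputable def volterraSol (K : ℝ → ℝ → ℂ) (x : ℝ) : ℂ :=
  ∑' n, volterraIter K n x

structure IsVolterraKernel (K : ℝ → ℝ → ℂ) (g : ℝ → ℝ) : Prop where
  measurable : Measurable (Function.uncurry K)
  integrable : Integrable g
  norm_le : ∀ x y, x < y → ‖K x y‖ ≤ g y

section Volterra

variable {K : ℝ → ℝ → ℂ} {g : ℝ → ℝ} {u : ℝ → ℂ}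

theorem measurable_volterraOp (hK : Measurable (Function.uncurry K)) (hu : Measurable u) :
    Measurable (volterraOp K u) := by
  have hF : Measurable fun p : ℝ × ℝ => if p.1 < p.2 then K p.1 p.2 * u p.2 else 0 :=
    Measurable.ite (measurableSet_lt measurable_fst measurable_snd)
      (hK.mul (hu.comp measurable_snd)) measurable_const
  have h_eq : volterraOp K u = fun x => ∫ y, if x < y then K x y * u y else 0 := by
    ext x
    rw [volterraOp, ← integral_indicator measurableSet_Ioi]
    rfl
  rw [h_eq]
  exact hF.stronglyMeasurable.integral_prod_right'.measurable

theorem volterraIter_succ (n : ℕ) : volterraIter K (n + 1) = volterraOp K (volterraIter K n) :=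
  Function.iterate_succ_apply' _ _ _

theorem measurable_volterraIter (hK : Measurable (Function.uncurry K)) (n : ℕ) :
    Measurable (volterraIter K n) := by
  induction n with
  | zero => exact measurable_const
  | succ n ih =>
    rw [volterraIter_succ]
    exact measurable_volterraOp hK ih

theorem norm_kernel_mul_le (hKg : ∀ x y, x < y → ‖K x y‖ ≤ g y) {c : ℝ} {n : ℕ}
    (hu : ∀ y, ‖u y‖ ≤ c * tailIntegral g y ^ n / n !) {x y : ℝ} (hxy : x < y) :
    ‖K x y * u y‖ ≤ c / n ! * (g y * tailIntegral g y ^ n) := by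
  have hg0 : 0 ≤ g y := (norm_nonneg _).trans (hKg x y hxy)
  calc ‖K x y * u y‖ ≤ g y * (c * tailIntegral g y ^ n / n !) := by
        rw [norm_mul]; exact mul_le_mul (hKg x y hxy) (hu y) (norm_nonneg _) hg0
    _ = c / n ! * (g y * tailIntegral g y ^ n) := by ring

namespace IsVolterraKernel

variable (hK : IsVolterraKernel K g)
include hK

theorem nonneg : 0 ≤ g :=
  fun y => (norm_nonneg _).trans (hK.norm_le (y - 1) y (by linarith))

theorem integrableOn_kernel_mul (hu_meas : Measurable u) {c : ℝ} {n : ℕ}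
    (hu : ∀ y, ‖u y‖ ≤ c * tailIntegral g y ^ n / n !) (x : ℝ) :
    IntegrableOn (fun y => K x y * u y) (Ioi x) :=
  ((integrable_mul_tailIntegral_pow hK.integrable n).const_mul (c / n !)).integrableOn.mono'
    ((hK.measurable.comp measurable_prodMk_left).mul hu_meas).aestronglyMeasurable
    ((ae_restrict_iff' measurableSet_Ioi).2
      (Eventually.of_forall fun _ hy => norm_kernel_mul_le hK.norm_le hu hy))

theorem integral_norm_kernel_mul_le (hu_meas : Measurable u) {c : ℝ} {n : ℕ}
    (hu : ∀ y, ‖u y‖ ≤ c * tailIntegral g y ^ n / n !) (x : ℝ) :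
    ∫ y in Ioi x, ‖K x y * u y‖ ≤ c * tailIntegral g x ^ (n + 1) / (n + 1)! :=
  calc ∫ y in Ioi x, ‖K x y * u y‖
      ≤ ∫ y in Ioi x, c / n ! * (g y * tailIntegral g y ^ n) :=
        setIntegral_mono_on (hK.integrableOn_kernel_mul hu_meas hu x).norm
          ((integrable_mul_tailIntegral_pow hK.integrable n).const_mul _).integrableOn
          measurableSet_Ioi fun _ hy => norm_kernel_mul_le hK.norm_le hu hy
    _ = c * tailIntegral g x ^ (n + 1) / (n + 1)! := by
        rw [integral_const_mul, integral_mul_tailIntegral_pow hK.integrable, Nat.factorial_succ]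
        push_cast
        field_simp

theorem norm_volterraOp_le (hu_meas : Measurable u) {c : ℝ} {n : ℕ}
    (hu : ∀ y, ‖u y‖ ≤ c * tailIntegral g y ^ n / n !) (x : ℝ) :
    ‖volterraOp K u x‖ ≤ c * tailIntegral g x ^ (n + 1) / (n + 1)! :=
  (norm_integral_le_integral_norm _).trans (hK.integral_norm_kernel_mul_le hu_meas hu x)

theorem norm_volterraIter_le (n : ℕ) (x : ℝ) :
    ‖volterraIter K n x‖ ≤ tailIntegral g x ^ n / n ! := by
  induction n generalizing x with
  | zero => simp [volterraIter]
  | succ n ih =>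
    rw [volterraIter_succ]
    simpa using hK.norm_volterraOp_le (measurable_volterraIter hK.measurable n) (c := 1)
      (by simpa using ih) x

theorem hasSum_volterraIter (x : ℝ) :
    HasSum (fun n => volterraIter K n x) (volterraSol K x) :=
  (Summable.of_norm_bounded (Real.summable_pow_div_factorial (tailIntegral g x))
    (hK.norm_volterraIter_le · x)).hasSum

theorem hasSum_volterraIter_succ (x : ℝ) :
    HasSum (fun n => volterraIter K (n + 1) x) (volterraSol K x - 1) := by
  simpa [volterraIter] using (hasSum_nat_add_iff' 1).2 (hK.hasSum_volterraIter x)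

theorem measurable_volterraSol : Measurable (volterraSol K) :=
  measurable_of_tendsto_metrizable
    (fun _ => Finset.measurable_sum _ fun n _ => measurable_volterraIter hK.measurable n)
    (tendsto_pi_nhds.2 fun x => (hK.hasSum_volterraIter x).tendsto_sum_nat)

theorem norm_volterraSol_sub_one_le (x : ℝ) :
    ‖volterraSol K x - 1‖ ≤ Real.exp (tailIntegral g x) - 1 := by
  have hexp : HasSum (fun n => tailIntegral g x ^ (n + 1) / (n + 1)!)
      (Real.exp (tailIntegral g x) - 1) := by
    rw [Real.exp_eq_exp_ℝ]
    simpa using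
      (hasSum_nat_add_iff' 1).2 (NormedSpace.expSeries_div_hasSum_exp (tailIntegral g x))
  exact (hK.hasSum_volterraIter_succ x).norm_le_of_bounded hexp
    fun n => hK.norm_volterraIter_le (n + 1) x

theorem norm_volterraSol_le (x : ℝ) : ‖volterraSol K x‖ ≤ Real.exp (∫ y, g y) :=
  calc ‖volterraSol K x‖
      ≤ ‖volterraSol K x - 1‖ + ‖(1 : ℂ)‖ := norm_le_norm_sub_add _ _
    _ ≤ Real.exp (tailIntegral g x) := by
        rw [norm_one]; linarith [hK.norm_volterraSol_sub_one_le x]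
    _ ≤ Real.exp (∫ y, g y) :=
        Real.exp_le_exp.2 (setIntegral_le_integral hK.integrable (Eventually.of_forall hK.nonneg))

theorem volterraSol_eq (x : ℝ) : volterraSol K x = 1 + volterraOp K (volterraSol K) x := by
  have hbound (n : ℕ) (y : ℝ) : ‖volterraIter K n y‖ ≤ 1 * tailIntegral g y ^ n / n ! := by
    simpa using hK.norm_volterraIter_le n y
  have hmeas := measurable_volterraIter hK.measurable
  have hswap := integral_tsum_of_summable_integral_norm
    (fun n => hK.integrableOn_kernel_mul (hmeas n) (hbound n) x)
    (Summable.of_nonneg_of_le (fun n => integral_nonneg fun _ => norm_nonneg _)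
      (fun n => hK.integral_norm_kernel_mul_le (hmeas n) (hbound n) x)
      (by simpa using (summable_nat_add_iff 1).2 (Real.summable_pow_div_factorial _)))
  have hterm (n : ℕ) : ∫ y in Ioi x, K x y * volterraIter K n y = volterraIter K (n + 1) x := by
    rw [volterraIter_succ]; rfl
  simp_rw [hterm, tsum_mul_left] at hswap
  rw [volterraOp, ← sub_eq_iff_eq_add', ← (hK.hasSum_volterraIter_succ x).tsum_eq, hswap]
  rfl

theorem eq_zero_of_eq_volterraOp {d : ℝ → ℂ} (hd_meas : Measurable d) {C : ℝ}
    (hC : ∀ x, ‖d x‖ ≤ C) (hd : ∀ x, d x = volterraOp K d x) : d = 0 := by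
  have hbound (n : ℕ) (x : ℝ) : ‖d x‖ ≤ C * (tailIntegral g x ^ n / n !) := by
    rw [← mul_div_assoc]
    induction n generalizing x with
    | zero => simpa using hC x
    | succ n ih => rw [hd x]; exact hK.norm_volterraOp_le hd_meas ih x
  ext x
  have hlim : Tendsto (fun n => C * (tailIntegral g x ^ n / n !)) atTop (𝓝 0) := by
    simpa using (FloorSemiring.tendsto_pow_div_factorial_atTop (tailIntegral g x)).const_mul C
  exact norm_le_zero_iff.1 (ge_of_tendsto' hlim fun n => hbound n x)

theorem eq_volterraSol_of_eq {m : ℝ → ℂ} (hm_meas : Measurable m) {C : ℝ}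
    (hC : ∀ x, ‖m x‖ ≤ C) (hm : ∀ x, m x = 1 + volterraOp K m x) : m = volterraSol K := by
  have hm_int := hK.integrableOn_kernel_mul hm_meas (n := 0) (fun x => by simpa using hC x)
  have hsol_int := hK.integrableOn_kernel_mul hK.measurable_volterraSol (n := 0)
    (fun x => by simpa using hK.norm_volterraSol_le x)
  refine sub_eq_zero.1 (hK.eq_zero_of_eq_volterraOp (hm_meas.sub hK.measurable_volterraSol)
    (fun x => norm_sub_le_of_le (hC x) (hK.norm_volterraSol_le x)) fun x => ?_)
  rw [Pi.sub_apply, hm x, hK.volterraSol_eq x, add_sub_add_left_eq_sub]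
  simp only [volterraOp, Pi.sub_apply, mul_sub]
  exact (integral_sub (hm_int x) (hsol_int x)).symm

end IsVolterraKernel

end Volterra

/-- For `V ∈ L¹(ℝ)` and `Im k ≥ 0`, `k ≠ 0`, the modified Lippmann–Schwinger
equation `m(x) = 1 + ∫ₓ^∞ D_k(y−x) V(y) m(y) dy` has a unique bounded solution `m = m₊(k;·)`,
satisfying `|m₊(k;x) − 1| ≤ exp(|k|⁻¹ ∫ₓ^∞ |V|) − 1` and `|m₊(k;x)| ≤ exp(‖V‖₁/|k|)`. -/
theorem stmt14 (V : ℝ → ℂ) (hV : Integrable V)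
    (k : ℂ) (hk : 0 ≤ k.im) (hk0 : k ≠ 0) :
    ∃ m : ℝ → ℂ, Measurable m ∧ (∃ C, ∀ x, ‖m x‖ ≤ C) ∧
      (∀ x, m x = 1 + ∫ y in Set.Ioi x, Dker k (y - x) * V y * m y) ∧
      (∀ m' : ℝ → ℂ, Measurable m' → (∃ C, ∀ x, ‖m' x‖ ≤ C) →
        (∀ x, m' x = 1 + ∫ y in Set.Ioi x, Dker k (y - x) * V y * m' y) → m' = m) ∧
      (∀ x, ‖m x - 1‖ ≤ Real.exp (‖k‖⁻¹ * ∫ y in Set.Ioi x, ‖V y‖) - 1) ∧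
      (∀ x, ‖m x‖ ≤ Real.exp ((∫ y, ‖V y‖) / ‖k‖)) := by
  -- A measurable representative of `V` makes the kernel jointly measurable, changing no integral.
  obtain ⟨W, hW, hVW⟩ : ∃ W, Measurable W ∧ V =ᵐ[volume] W :=
    ⟨hV.1.mk V, hV.1.stronglyMeasurable_mk.measurable, hV.1.ae_eq_mk⟩
  set K : ℝ → ℝ → ℂ := fun x y => Dker k (y - x) * W y
  set g : ℝ → ℝ := fun y => ‖k‖⁻¹ * ‖W y‖
  have hK : IsVolterraKernel K g :=
    ⟨((continuous_dker k).measurable.comp (measurable_snd.sub measurable_fst)).mul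
      (hW.comp measurable_snd), (hV.congr hVW).norm.const_mul _, fun x y hxy => by
      rw [norm_mul]
      exact mul_le_mul_of_nonneg_right (norm_dker_le hk hk0 (sub_nonneg.2 hxy.le))
        (norm_nonneg _)⟩
  have hVK (u : ℝ → ℂ) (x : ℝ) :
      ∫ y in Ioi x, Dker k (y - x) * V y * u y = volterraOp K u x :=
    integral_congr_ae (ae_restrict_of_ae (hVW.mono fun y hy => by simp only [hy, K]))
  have hnormV (s : Set ℝ) : ∫ y in s, ‖V y‖ = ∫ y in s, ‖W y‖ :=
    integral_congr_ae (ae_restrict_of_ae (hVW.mono fun y hy => by simp only [hy]))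
  refine ⟨volterraSol K, hK.measurable_volterraSol, ⟨_, hK.norm_volterraSol_le⟩,
    fun x => by rw [hVK]; exact hK.volterraSol_eq x,
    fun m' hm' ⟨C, hC⟩ hm'_eq => hK.eq_volterraSol_of_eq hm' hC fun x => by
      rw [← hVK]; exact hm'_eq x,
    fun x => ?_, fun x => ?_⟩
  · rw [hnormV, ← integral_const_mul]
    exact hK.norm_volterraSol_sub_one_le x
  · rw [← setIntegral_univ, hnormV, setIntegral_univ, div_eq_inv_mul, ← integral_const_mul]
    exact hK.norm_volterraSol_le x
end

section
/- Let V ∈ L¹(ℝ) with XV ∈ L¹(ℝ) and Im(k) ≥ 0 (including k = 0). Then the solution m₊(k;·) of the modified Lippmann–Schwinger equation satisfies |m₊(k;x) − 1| ≤ exp( ∫ₓ^∞ (y − x)|V(y)| dy ) − 1 for all x ∈ ℝ, and moreover |m₊(k;x)| ≤ 2(1 + |x|) e^{‖V‖₁ + 2‖XV‖₁}. -/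
/-!
Since `‖D_k(t)‖ ≤ t` for `t ≥ 0`, a bounded solution satisfies the Volterra inequality
`‖m y‖ ≤ 1 + ∫_y^∞ (z - y) ‖V z‖ ‖m z‖ dz`. For a weight `w ≥ 0` with tail `ψ t = ∫_t^∞ w`,
Fubini gives `∫_t^∞ w ψⁿ = ψ(t)ⁿ⁺¹/(n+1)`, so Picard iteration bounds any bounded `u ≥ 0` with
`u ≤ 1 + ∫_y^∞ w u` by the partial sums of `exp ψ` plus a remainder `C ψⁿ/n! → 0`.
The first estimate takes `w = (z - x)₊ ‖V‖`. For the second, `u = ‖m‖ / (1 + y₋)` satisfies the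
inequality with `w = (1 + |z|) ‖V‖`, because `(z - y)(1 + z₋) ≤ (1 + y₋)(1 + |z|)` for `y ≤ z`.
-/

open MeasureTheory Set Filter Topology
open scoped Nat

theorem norm_Dker_le {k : ℂ} (hk : 0 ≤ k.im) {t : ℝ} (ht : 0 ≤ t) : ‖Dker k t‖ ≤ t := by
  have hexp : ∀ s ∈ uIoc 0 t, ‖Complex.exp (2 * Complex.I * k * s)‖ ≤ 1 := by
    intro s hs
    rw [uIoc_of_le ht] at hs
    have hre : (2 * Complex.I * k * s).re = -(2 * s * k.im) := by
      simp [Complex.mul_re, Complex.mul_im, mul_comm, mul_left_comm]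
    rw [Complex.norm_exp, Real.exp_le_one_iff, hre]
    nlinarith [hs.1]
  simpa [Dker, abs_of_nonneg ht] using intervalIntegral.norm_integral_le_of_norm_le_const hexp

section TailIntegral

variable {w : ℝ → ℝ}

theorem continuous_integral_Ioi (hw : Integrable w) : Continuous fun t => ∫ z in Ioi t, w z := by
  have h : ∀ t, ∫ z in Ioi t, w z = (∫ z in Ioi 0, w z) - ∫ z in 0..t, w z := fun t => by
    rw [← intervalIntegral.integral_Ioi_sub_Ioi' hw.integrableOn hw.integrableOn]
    ring
  exact (continuous_const.sub (intervalIntegral.continuous_primitive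
    (fun _ _ => hw.intervalIntegrable) 0)).congr fun t => (h t).symm

theorem integrable_mul_integral_Ioi_pow (hw : Integrable w) (n : ℕ) :
    Integrable fun y => w y * (∫ z in Ioi y, w z) ^ n := by
  refine hw.mul_bdd (c := (∫ z, ‖w z‖) ^ n)
    ((continuous_integral_Ioi hw).pow n).aestronglyMeasurable
    (ae_of_all _ fun y => ?_)
  rw [norm_pow]
  exact pow_le_pow_left₀ (norm_nonneg _) ((norm_integral_le_integral_norm _).trans
    (setIntegral_le_integral hw.norm (ae_of_all _ fun _ => norm_nonneg _))) n

theorem integral_Ioi_mul_integral_Ioc {f g : ℝ → ℝ} (hf : Integrable f) (hg : Integrable g)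
    (t : ℝ) :
    ∫ y in Ioi t, f y * ∫ z in Ioc t y, g z = ∫ z in Ioi t, g z * ∫ y in Ici z, f y := by
  set F : ℝ → ℝ → ℝ := fun y z => f y * (Iic y).indicator g z
  have hF : Integrable (Function.uncurry F)
      ((volume.restrict (Ioi t)).prod (volume.restrict (Ioi t))) := by
    have hFind : Function.uncurry F
        = {p : ℝ × ℝ | p.2 ≤ p.1}.indicator fun p => f p.1 * g p.2 := by
      ext ⟨y, z⟩
      by_cases h : z ≤ y <;> simp [F, h]
    rw [hFind]
    exact (hf.integrableOn.mul_prod hg.integrableOn).indicator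
      (measurableSet_le measurable_snd measurable_fst)
  have hleft : ∀ y, ∫ z in Ioi t, F y z = f y * ∫ z in Ioc t y, g z := fun y => by
    rw [integral_const_mul, setIntegral_indicator measurableSet_Iic, Ioi_inter_Iic]
  have hright : ∀ z ∈ Ioi t, ∫ y in Ioi t, F y z = g z * ∫ y in Ici z, f y := fun z hz => by
    have hFz : ∀ y, F y z = (Ici z).indicator f y * g z := fun y => by
      by_cases h : z ≤ y <;> simp [F, h]
    simp_rw [hFz]
    rw [integral_mul_const, setIntegral_indicator measurableSet_Ici,
      inter_eq_right.2 (Ici_subset_Ioi.2 hz), mul_comm]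
  simp_rw [← hleft]
  rw [integral_integral_swap hF, setIntegral_congr_fun measurableSet_Ioi hright]

theorem integral_Ioi_mul_integral_Ioi_pow (hw : Integrable w) (n : ℕ) (t : ℝ) :
    ∫ y in Ioi t, w y * (∫ z in Ioi y, w z) ^ n = (∫ z in Ioi t, w z) ^ (n + 1) / (n + 1) := by
  set ψ : ℝ → ℝ := fun t => ∫ z in Ioi t, w z
  have hint := integrable_mul_integral_Ioi_pow hw
  induction n generalizing t with
  | zero => simp
  | succ n ih =>
    have hdiff : ∀ y ∈ Ioi t, ψ t - ψ y = ∫ z in Ioc t y, w z := fun y hy => by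
      rw [intervalIntegral.integral_Ioi_sub_Ioi hw.integrableOn hy.le,
        intervalIntegral.integral_of_le hy.le]
    have hA : ∫ y in Ioi t, w y * ψ y ^ n * (ψ t - ψ y)
        = ψ t * (ψ t ^ (n + 1) / (n + 1)) - ∫ y in Ioi t, w y * ψ y ^ (n + 1) := by
      rw [← ih, ← integral_const_mul,
        ← integral_sub ((hint n).integrableOn.const_mul _) (hint (n + 1)).integrableOn]
      congr 1
      ext y
      ring
    have hB : ∫ y in Ioi t, w y * ψ y ^ n * (ψ t - ψ y)
        = (∫ y in Ioi t, w y * ψ y ^ (n + 1)) / (n + 1) := by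
      rw [setIntegral_congr_fun measurableSet_Ioi fun y hy => by rw [hdiff y hy],
        integral_Ioi_mul_integral_Ioc (hint n) hw, ← integral_div]
      refine setIntegral_congr_fun measurableSet_Ioi fun z _ => ?_
      simp only [integral_Ici_eq_integral_Ioi, ψ, ih]
      ring
    have hn : (n : ℝ) + 1 ≠ 0 := by positivity
    push_cast
    field_simp at hA hB ⊢
    linear_combination hA - hB

theorem integrable_mul_integral_Ioi_pow_div (hw : Integrable w) (n : ℕ) (c : ℝ) :
    Integrable fun y => w y * ((∫ z in Ioi y, w z) ^ n / c) := by
  simp_rw [← mul_div_assoc]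
  exact (integrable_mul_integral_Ioi_pow hw n).div_const c

theorem integral_Ioi_mul_pow_div_factorial (hw : Integrable w) (j : ℕ) (t : ℝ) :
    ∫ y in Ioi t, w y * ((∫ z in Ioi y, w z) ^ j / j !)
      = (∫ z in Ioi t, w z) ^ (j + 1) / (j + 1)! := by
  simp_rw [← mul_div_assoc]
  rw [integral_div, integral_Ioi_mul_integral_Ioi_pow hw, Nat.factorial_succ]
  push_cast
  field_simp

end TailIntegral

/-- After `n` Picard steps from `u ≤ C`, a solution of `u ≤ 1 + ∫_y^∞ w u` is bounded by
`picardBound C n (∫_y^∞ w)`. -/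
noncomputable def picardBound (C : ℝ) (n : ℕ) (x : ℝ) : ℝ :=
  ∑ j ∈ Finset.range n, x ^ j / j ! + C * (x ^ n / n !)

theorem picardBound_le_exp_add {x : ℝ} (hx : 0 ≤ x) (C : ℝ) (n : ℕ) :
    picardBound C n x ≤ Real.exp x + C * (x ^ n / n !) := by
  simpa [picardBound] using Real.sum_le_exp_of_nonneg hx n

section Gronwall

variable {w : ℝ → ℝ}

theorem integrable_mul_picardBound (hw : Integrable w) (C : ℝ) (n : ℕ) :
    Integrable fun y => w y * picardBound C n (∫ z in Ioi y, w z) := by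
  simp only [picardBound, mul_add, Finset.mul_sum, mul_left_comm (w _) C]
  exact (integrable_finsetSum _ fun j _ => integrable_mul_integral_Ioi_pow_div hw j _).add
    ((integrable_mul_integral_Ioi_pow_div hw n _).const_mul C)

theorem integral_Ioi_mul_picardBound (hw : Integrable w) (C : ℝ) (n : ℕ) (t : ℝ) :
    ∫ y in Ioi t, w y * picardBound C n (∫ z in Ioi y, w z)
      = picardBound C (n + 1) (∫ z in Ioi t, w z) - 1 := by
  have hint := fun j =>
    (integrable_mul_integral_Ioi_pow_div hw j (j ! : ℝ)).integrableOn (s := Ioi t)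
  simp only [picardBound, mul_add, Finset.mul_sum, mul_left_comm (w _) C]
  rw [integral_add (integrable_finsetSum _ fun j _ => hint j) ((hint n).const_mul C),
    integral_finsetSum _ fun j _ => hint j, integral_const_mul]
  simp only [integral_Ioi_mul_pow_div_factorial hw]
  rw [Finset.sum_range_succ']
  simp only [pow_zero, Nat.factorial_zero, Nat.cast_one, div_one]
  ring

theorem integral_Ioi_mul_le_exp_sub_one {u : ℝ → ℝ} {C x₀ : ℝ} (hw : Integrable w)
    (hw0 : ∀ y, 0 ≤ w y) (hu0 : ∀ y, 0 ≤ u y) (huC : ∀ y, u y ≤ C)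
    (hrec : ∀ y, x₀ ≤ y → u y ≤ 1 + ∫ z in Ioi y, w z * u z) :
    ∫ z in Ioi x₀, w z * u z ≤ Real.exp (∫ z in Ioi x₀, w z) - 1 := by
  set ψ : ℝ → ℝ := fun t => ∫ z in Ioi t, w z
  have step : ∀ n t, (∀ y, t < y → u y ≤ picardBound C n (ψ y)) →
      ∫ z in Ioi t, w z * u z ≤ picardBound C (n + 1) (ψ t) - 1 := by
    intro n t hu
    rw [← integral_Ioi_mul_picardBound hw]
    refine integral_mono_of_nonneg (ae_of_all _ fun y => mul_nonneg (hw0 y) (hu0 y))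
      (integrable_mul_picardBound hw C n).integrableOn ?_
    filter_upwards [ae_restrict_mem measurableSet_Ioi] with y hy
    exact mul_le_mul_of_nonneg_left (hu y hy) (hw0 y)
  have bound : ∀ n y, x₀ ≤ y → u y ≤ picardBound C n (ψ y) := by
    intro n
    induction n with
    | zero => simpa [picardBound] using fun y _ => huC y
    | succ n ih =>
      intro y hy
      linarith [hrec y hy, step n y fun z hz => ih z (hy.trans hz.le)]
  have hψ0 : 0 ≤ ψ x₀ := setIntegral_nonneg measurableSet_Ioi fun y _ => hw0 y
  have hlim : Tendsto (fun n => Real.exp (ψ x₀) - 1 + C * (ψ x₀ ^ (n + 1) / (n + 1)!)) atTop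
      (𝓝 (Real.exp (ψ x₀) - 1 + C * 0)) :=
    ((FloorSemiring.tendsto_pow_div_factorial_atTop (ψ x₀)).comp
      (tendsto_add_atTop_nat 1)).const_mul C |>.const_add _
  rw [mul_zero, add_zero] at hlim
  refine ge_of_tendsto' hlim fun n => ?_
  linarith [step n x₀ fun y hy => bound n y hy.le, picardBound_le_exp_add hψ0 C (n + 1)]

end Gronwall

theorem sub_mul_one_add_max_neg_le {y z : ℝ} (hyz : y ≤ z) :
    (z - y) * (1 + max (-z) 0) ≤ (1 + max (-y) 0) * (1 + |z|) := by
  rcases le_total 0 y with hy | hy <;> rcases le_total 0 z with hz | hz <;>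
    simp only [max_eq_left, max_eq_right, abs_of_nonneg, abs_of_nonpos, neg_nonneg,
      neg_nonpos, *] <;> nlinarith

section LippmannSchwinger

variable {V m : ℝ → ℂ} {k : ℂ} {C : ℝ}

theorem integrable_mul_norm_of_abs_le (hV : Integrable V)
    (hXV : Integrable fun x => |x| * ‖V x‖) {g : ℝ → ℝ} {a : ℝ} (hg : Continuous g)
    (hga : ∀ z, |g z| ≤ a + |z|) : Integrable fun z => g z * ‖V z‖ := by
  refine ((hV.norm.const_mul a).add hXV).mono'
    (hg.aestronglyMeasurable.mul hV.norm.aestronglyMeasurable) (ae_of_all _ fun z => ?_)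
  rw [norm_mul, norm_norm, Real.norm_eq_abs, Pi.add_apply, ← add_mul]
  exact mul_le_mul_of_nonneg_right (hga z) (norm_nonneg _)

theorem norm_sub_one_le_integral (hV : Integrable V) (hXV : Integrable fun x => |x| * ‖V x‖)
    (hk : 0 ≤ k.im) (hm : Measurable m) (hC : ∀ x, ‖m x‖ ≤ C)
    (heq : ∀ x, m x = 1 + ∫ y in Ioi x, Dker k (y - x) * V y * m y) (x : ℝ) :
    ‖m x - 1‖ ≤ ∫ y in Ioi x, (y - x) * ‖V y‖ * ‖m y‖ := by
  have hint : Integrable fun y => (y - x) * ‖V y‖ * ‖m y‖ :=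
    (integrable_mul_norm_of_abs_le hV hXV (by fun_prop) (a := |x|)
      fun y => (abs_sub y x).trans_eq (add_comm _ _)).mul_bdd hm.norm.aestronglyMeasurable
      (ae_of_all _ fun y => (norm_norm (m y)).trans_le (hC y))
  rw [heq x, add_sub_cancel_left]
  refine norm_integral_le_of_norm_le hint.integrableOn ?_
  filter_upwards [ae_restrict_mem measurableSet_Ioi] with y hy
  rw [norm_mul, norm_mul]
  gcongr
  exact norm_Dker_le hk (sub_nonneg.2 (le_of_lt hy))

theorem norm_sub_one_le_exp_sub_one (hV : Integrable V)
    (hXV : Integrable fun x => |x| * ‖V x‖) (hk : 0 ≤ k.im) (hm : Measurable m)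
    (hC : ∀ x, ‖m x‖ ≤ C) (heq : ∀ x, m x = 1 + ∫ y in Ioi x, Dker k (y - x) * V y * m y)
    (x : ℝ) : ‖m x - 1‖ ≤ Real.exp (∫ y in Ioi x, (y - x) * ‖V y‖) - 1 := by
  set w : ℝ → ℝ := fun z => max (z - x) 0 * ‖V z‖
  have hw : Integrable w := integrable_mul_norm_of_abs_le hV hXV (by fun_prop) (a := |x|)
    fun z => by
      rw [abs_of_nonneg (le_max_right _ _)]
      exact max_le (by linarith [le_abs_self z, neg_abs_le x]) (by positivity)
  have hwm : Integrable fun z => w z * ‖m z‖ :=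
    hw.mul_bdd hm.norm.aestronglyMeasurable (ae_of_all _ fun z => (norm_norm (m z)).trans_le (hC z))
  have hw_eq : ∀ z ∈ Ioi x, w z = (z - x) * ‖V z‖ := fun z hz => by
    simp only [w, max_eq_left (sub_nonneg.2 (mem_Ioi.1 hz).le)]
  have hrec : ∀ y, x ≤ y → ‖m y‖ ≤ 1 + ∫ z in Ioi y, w z * ‖m z‖ := by
    intro y hxy
    have hmono : ∫ z in Ioi y, (z - y) * ‖V z‖ * ‖m z‖ ≤ ∫ z in Ioi y, w z * ‖m z‖ := by
      refine integral_mono_of_nonneg ?_ hwm.integrableOn ?_ <;>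
        filter_upwards [ae_restrict_mem measurableSet_Ioi] with z (hz : y < z)
      · positivity [sub_nonneg.2 hz.le]
      · exact mul_le_mul_of_nonneg_right (mul_le_mul_of_nonneg_right
          (le_max_of_le_left (by linarith)) (norm_nonneg _)) (norm_nonneg _)
    linarith [norm_le_norm_add_norm_sub' (m y) 1, norm_one (α := ℂ),
      norm_sub_one_le_integral hV hXV hk hm hC heq y]
  calc ‖m x - 1‖ ≤ ∫ z in Ioi x, (z - x) * ‖V z‖ * ‖m z‖ :=
        norm_sub_one_le_integral hV hXV hk hm hC heq x
    _ = ∫ z in Ioi x, w z * ‖m z‖ :=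
        setIntegral_congr_fun measurableSet_Ioi fun z hz => by rw [hw_eq z hz]
    _ ≤ Real.exp (∫ z in Ioi x, w z) - 1 :=
        integral_Ioi_mul_le_exp_sub_one hw (fun z => by positivity) (fun _ => norm_nonneg _) hC hrec
    _ = Real.exp (∫ y in Ioi x, (y - x) * ‖V y‖) - 1 := by
        rw [setIntegral_congr_fun measurableSet_Ioi hw_eq]

theorem norm_le_one_add_abs_mul_exp (hV : Integrable V)
    (hXV : Integrable fun x => |x| * ‖V x‖) (hk : 0 ≤ k.im) (hm : Measurable m)
    (hC : ∀ x, ‖m x‖ ≤ C) (heq : ∀ x, m x = 1 + ∫ y in Ioi x, Dker k (y - x) * V y * m y)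
    (x : ℝ) : ‖m x‖ ≤ (1 + |x|) * Real.exp (∫ y, (1 + |y|) * ‖V y‖) := by
  set p : ℝ → ℝ := fun y => 1 + max (-y) 0
  have hp1 : ∀ y, 1 ≤ p y := fun y => le_add_of_nonneg_right (le_max_right _ _)
  set u : ℝ → ℝ := fun y => ‖m y‖ / p y
  have hu0 : ∀ y, 0 ≤ u y := fun y => div_nonneg (norm_nonneg _) (by linarith [hp1 y])
  have huC : ∀ y, u y ≤ C := fun y => (div_le_self (norm_nonneg _) (hp1 y)).trans (hC y)
  have hpu : ∀ y, ‖m y‖ = p y * u y := fun y => by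
    simp only [u]
    field_simp [(by linarith [hp1 y] : p y ≠ 0)]
  set w : ℝ → ℝ := fun z => (1 + |z|) * ‖V z‖
  have hw : Integrable w := integrable_mul_norm_of_abs_le hV hXV (by fun_prop) (a := 1)
    fun z => (abs_of_nonneg (by positivity)).le
  have hw0 : ∀ z, 0 ≤ w z := fun z => by positivity
  have hwu : Integrable fun z => w z * u z :=
    hw.mul_bdd (hm.norm.div (by fun_prop)).aestronglyMeasurable
      (ae_of_all _ fun z => (Real.norm_of_nonneg (hu0 z)).trans_le (huC z))
  have hrec : ∀ y, u y ≤ 1 + ∫ z in Ioi y, w z * u z := by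
    intro y
    have hmono : ∫ z in Ioi y, (z - y) * ‖V z‖ * ‖m z‖ ≤ p y * ∫ z in Ioi y, w z * u z := by
      rw [← integral_const_mul]
      refine integral_mono_of_nonneg ?_ (hwu.integrableOn.const_mul _) ?_ <;>
        filter_upwards [ae_restrict_mem measurableSet_Ioi] with z (hz : y < z)
      · positivity [sub_nonneg.2 hz.le]
      · calc (z - y) * ‖V z‖ * ‖m z‖ = (z - y) * p z * (‖V z‖ * u z) := by rw [hpu z]; ring
          _ ≤ p y * (1 + |z|) * (‖V z‖ * u z) := mul_le_mul_of_nonneg_right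
              (sub_mul_one_add_max_neg_le hz.le) (mul_nonneg (norm_nonneg _) (hu0 z))
          _ = p y * (w z * u z) := by ring
    rw [div_le_iff₀ (by linarith [hp1 y])]
    nlinarith [norm_le_norm_add_norm_sub' (m y) 1, norm_one (α := ℂ),
      norm_sub_one_le_integral hV hXV hk hm hC heq y, hp1 y]
  have hux : u x ≤ Real.exp (∫ z in Ioi x, w z) := by
    linarith [hrec x, integral_Ioi_mul_le_exp_sub_one (x₀ := x) hw hw0 hu0 huC fun y _ => hrec y]
  have hpx : p x ≤ 1 + |x| := add_le_add_right (max_le (neg_le_abs x) (abs_nonneg x)) 1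
  have htail : ∫ z in Ioi x, w z ≤ ∫ z, w z := setIntegral_le_integral hw (ae_of_all _ hw0)
  calc ‖m x‖ = p x * u x := hpu x
    _ ≤ (1 + |x|) * Real.exp (∫ z, w z) :=
        mul_le_mul hpx (hux.trans (Real.exp_le_exp.2 htail)) (hu0 x) (by positivity)

end LippmannSchwinger

/-- For `V ∈ L¹(ℝ)` with `XV ∈ L¹(ℝ)` and `Im k ≥ 0` (`k = 0` allowed), the
bounded solution `m₊(k;·)` of the modified Lippmann–Schwinger equation satisfies
`|m₊(k;x) − 1| ≤ exp(∫ₓ^∞ (y−x)|V(y)| dy) − 1` and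
`|m₊(k;x)| ≤ 2(1+|x|) e^{‖V‖₁ + 2‖XV‖₁}`. -/
theorem stmt15 (V : ℝ → ℂ) (hV : Integrable V)
    (hXV : Integrable (fun x => |x| * ‖V x‖))
    (k : ℂ) (hk : 0 ≤ k.im)
    (m : ℝ → ℂ) (hm_meas : Measurable m) (hm_bdd : ∃ C, ∀ x, ‖m x‖ ≤ C)
    (heq : ∀ x, m x = 1 + ∫ y in Set.Ioi x, Dker k (y - x) * V y * m y) :
    (∀ x, ‖m x - 1‖ ≤ Real.exp (∫ y in Set.Ioi x, (y - x) * ‖V y‖) - 1) ∧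
    (∀ x, ‖m x‖ ≤ 2 * (1 + |x|) *
      Real.exp ((∫ y, ‖V y‖) + 2 * ∫ y, |y| * ‖V y‖)) := by
  obtain ⟨C, hC⟩ := hm_bdd
  refine ⟨norm_sub_one_le_exp_sub_one hV hXV hk hm_meas hC heq, fun x => ?_⟩
  have hXV0 : 0 ≤ ∫ y, |y| * ‖V y‖ := integral_nonneg fun y => by positivity
  have hweight : ∫ y, (1 + |y|) * ‖V y‖ = (∫ y, ‖V y‖) + ∫ y, |y| * ‖V y‖ := by
    simp_rw [add_mul, one_mul]
    exact integral_add hV.norm hXV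
  calc ‖m x‖ ≤ (1 + |x|) * Real.exp (∫ y, (1 + |y|) * ‖V y‖) :=
        norm_le_one_add_abs_mul_exp hV hXV hk hm_meas hC heq x
    _ ≤ (1 + |x|) * Real.exp ((∫ y, ‖V y‖) + 2 * ∫ y, |y| * ‖V y‖) := by
        rw [hweight]
        gcongr
        linarith
    _ ≤ 2 * (1 + |x|) * Real.exp ((∫ y, ‖V y‖) + 2 * ∫ y, |y| * ‖V y‖) := by
        have := Real.exp_pos ((∫ y, ‖V y‖) + 2 * ∫ y, |y| * ‖V y‖)
        nlinarith [abs_nonneg x]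
end

section
/- Let λ > 0 and let H_L = −d²/dx² on [−L,L] with self-adjoint boundary conditions given by 2×2 matrices A, B (AB* = BA*, rank(A|B) = 2), such that iA − √λ B is invertible. Then λ is an eigenvalue of H_L if and only if the 2×2 matrix e^{2iL√λ} I + U(λ) σ_x is singular, where U(λ) = (iA − √λ B)^{−1}(iA + √λ B) and σ_x is the Pauli matrix [[0,1],[1,0]]. -/
/-!
For `ω ≠ 0`, the functions `(φ' - ω φ) e^{ωx}` and `(φ' + ω φ) e^{-ωx}` are first integrals of
`φ'' = ω² φ`, so on an interval every solution is `c e^{ωx} + d e^{-ωx}`. With `ω = i√λ` the boundary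
conditions on such a function read `M (c, d) = 0` for an explicit `2 × 2` matrix `M`, and a
nonzero `(c, d)` gives a function that does not vanish on `[-L, L]`, since value and derivative at
`0` determine `(c, d)`. Writing `C = iA - √λ B` and `D = iA + √λ B`, one has
`A + i√λ B = -i C` and `A - i√λ B = -i D`, whence
`M = -i e^{-i√λ L} C (e^{2i√λ L} I + C⁻¹ D σ_x)`; as `C` is invertible, `M` is singular exactly
when the last factor is.
-/

open Matrix

open Set Filter Topology Complex

theorem constant_of_hasDerivAt_zero_on_Icc {E : Type*} [NormedAddCommGroup E] [NormedSpace ℝ E]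
    {f : ℝ → E} {a b : ℝ} (h : ∀ x ∈ Icc a b, HasDerivAt f 0 x) :
    ∀ x ∈ Icc a b, f x = f a :=
  constant_of_has_deriv_right_zero (fun x hx => (h x hx).continuousAt.continuousWithinAt)
    fun x hx => (h x (Ico_subset_Icc_self hx)).hasDerivWithinAt

theorem hasDerivAt_cexp_const_mul_ofReal (ν : ℂ) (x : ℝ) :
    HasDerivAt (fun y : ℝ => cexp (ν * y)) (ν * cexp (ν * x)) x := by
  simpa [mul_comm] using ((hasDerivAt_id x).ofReal_comp.const_mul ν).cexp

section SecondOrder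

variable {φ φ' : ℝ → ℂ} {ω : ℂ}

theorem hasDerivAt_sub_mul_mul_cexp_eq_zero {ν : ℂ} (hν : ν ^ 2 = ω ^ 2) {x : ℝ}
    (hφ : HasDerivAt φ (φ' x) x) (hφ' : HasDerivAt φ' (ω ^ 2 * φ x) x) :
    HasDerivAt (fun y : ℝ => (φ' y - ν * φ y) * cexp (ν * y)) 0 x := by
  refine ((hφ'.sub (hφ.const_mul ν)).mul (hasDerivAt_cexp_const_mul_ofReal ν x)).congr_deriv ?_
  simp only [Pi.sub_apply]
  linear_combination (-(φ x * cexp (ν * x))) * hν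

noncomputable def expSum (ω c d : ℂ) (x : ℝ) : ℂ :=
  c * cexp (ω * x) + d * cexp (-(ω * x))

theorem hasDerivAt_expSum (ω c d : ℂ) (x : ℝ) :
    HasDerivAt (expSum ω c d) (expSum ω (ω * c) (-(ω * d)) x) x := by
  have hplus := (hasDerivAt_cexp_const_mul_ofReal ω x).const_mul c
  have hminus := (hasDerivAt_cexp_const_mul_ofReal (-ω) x).const_mul d
  simp only [neg_mul] at hminus
  exact (hplus.add hminus).congr_deriv (by simp only [expSum]; ring)

theorem hasDerivAt_expSum_mul_neg_mul (ω c d : ℂ) (x : ℝ) :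
    HasDerivAt (expSum ω (ω * c) (-(ω * d))) (ω ^ 2 * expSum ω c d x) x :=
  (hasDerivAt_expSum ω (ω * c) (-(ω * d)) x).congr_deriv (by simp only [expSum]; ring)

theorem exists_eqOn_expSum (hω : ω ≠ 0) {a b : ℝ}
    (h : ∀ x ∈ Icc a b, HasDerivAt φ (φ' x) x ∧ HasDerivAt φ' (ω ^ 2 * φ x) x) :
    ∃ c d, EqOn φ (expSum ω c d) (Icc a b) ∧ EqOn φ' (expSum ω (ω * c) (-(ω * d))) (Icc a b) := by
  have first_integral (ν : ℂ) (hν : ν ^ 2 = ω ^ 2) :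
      ∃ K, ∀ x ∈ Icc a b, (φ' x - ν * φ x) * cexp (ν * x) = K :=
    ⟨_, constant_of_hasDerivAt_zero_on_Icc fun x hx =>
      hasDerivAt_sub_mul_mul_cexp_eq_zero hν (h x hx).1 (h x hx).2⟩
  obtain ⟨Kp, hp⟩ := first_integral ω rfl
  obtain ⟨Km, hm⟩ := first_integral (-ω) (neg_sq ω)
  simp only [neg_mul, sub_neg_eq_add] at hm
  have hexp (x : ℝ) : cexp (ω * x) * cexp (-(ω * x)) = 1 := by
    rw [← Complex.exp_add, add_neg_cancel, Complex.exp_zero]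
  refine ⟨Km / (2 * ω), -(Kp / (2 * ω)), fun x hx => ?_, fun x hx => ?_⟩ <;>
    simp only [expSum, ← hp x hx, ← hm x hx] <;> field_simp
  · linear_combination (-2 * ω * φ x) * hexp x
  · linear_combination (-2 * φ' x) * hexp x

theorem eq_zero_of_expSum_eventuallyEq_zero (hω : ω ≠ 0) {c d : ℂ} {x₀ : ℝ}
    (h : expSum ω c d =ᶠ[𝓝 x₀] 0) : c = 0 ∧ d = 0 := by
  have hval : expSum ω c d x₀ = 0 := h.eq_of_nhds
  have hderiv : expSum ω (ω * c) (-(ω * d)) x₀ = 0 :=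
    (hasDerivAt_expSum ω c d x₀).unique ((hasDerivAt_const x₀ (0 : ℂ)).congr_of_eventuallyEq h)
  simp only [expSum] at hval hderiv
  have hc : c * (2 * ω * cexp (ω * x₀)) = 0 := by linear_combination ω * hval + hderiv
  have hd : d * (2 * ω * cexp (-(ω * x₀))) = 0 := by linear_combination ω * hval - hderiv
  exact ⟨(mul_eq_zero.1 hc).resolve_right (by simp [hω, Complex.exp_ne_zero]),
    (mul_eq_zero.1 hd).resolve_right (by simp [hω, Complex.exp_ne_zero])⟩

end SecondOrder

noncomputable def boundaryMatrix (A B : Matrix (Fin 2) (Fin 2) ℂ) (ω : ℂ) (L : ℝ) :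
    Matrix (Fin 2) (Fin 2) ℂ :=
  cexp (ω * L) • (A + ω • B) + cexp (-(ω * L)) • ((A - ω • B) * !![0, 1; 1, 0])

theorem boundaryMatrix_mulVec (A B : Matrix (Fin 2) (Fin 2) ℂ) (ω c d : ℂ) (L : ℝ) :
    boundaryMatrix A B ω L *ᵥ ![c, d] =
      A *ᵥ ![expSum ω c d L, expSum ω c d (-L)] -
        B *ᵥ ![-expSum ω (ω * c) (-(ω * d)) L, expSum ω (ω * c) (-(ω * d)) (-L)] := by
  have hL : ∀ ν : ℂ, ν * ((-L : ℝ) : ℂ) = -(ν * L) := fun ν => by push_cast; ring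
  ext i
  fin_cases i <;>
  · simp only [boundaryMatrix, expSum, hL, neg_neg, mulVec, dotProduct, Fin.sum_univ_two,
      Matrix.mul_apply, Matrix.add_apply, Matrix.sub_apply, Matrix.smul_apply, Pi.sub_apply,
      smul_eq_mul, Matrix.of_apply, Matrix.cons_val', Matrix.cons_val_zero, Matrix.cons_val_one,
      Matrix.empty_val', Matrix.cons_val_fin_one]
    ring

theorem exists_solution_iff_exists_mulVec_boundaryMatrix_eq_zero
    (A B : Matrix (Fin 2) (Fin 2) ℂ) {ω : ℂ} (hω : ω ≠ 0) {L : ℝ} (hL : 0 < L) :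
    (∃ φ φ' : ℝ → ℂ, (∃ x ∈ Icc (-L) L, φ x ≠ 0) ∧
        (∀ x ∈ Icc (-L) L, HasDerivAt φ (φ' x) x ∧ HasDerivAt φ' (ω ^ 2 * φ x) x) ∧
        A *ᵥ ![φ L, φ (-L)] = B *ᵥ ![-(φ' L), φ' (-L)]) ↔
      ∃ u ≠ 0, boundaryMatrix A B ω L *ᵥ u = 0 := by
  have hLmem : L ∈ Icc (-L) L := ⟨by linarith, le_rfl⟩
  have hLmem' : -L ∈ Icc (-L) L := ⟨le_rfl, by linarith⟩
  constructor
  · rintro ⟨φ, φ', ⟨x₀, hx₀, hφx₀⟩, hode, hbc⟩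
    obtain ⟨c, d, hcd⟩ := exists_eqOn_expSum hω hode
    refine ⟨![c, d], ?_, ?_⟩
    · intro h0
      simp only [Matrix.cons_eq_zero_iff, Matrix.zero_empty, and_true] at h0
      simp [hcd.1 hx₀, h0, expSum] at hφx₀
    · rw [boundaryMatrix_mulVec, ← hcd.1 hLmem, ← hcd.1 hLmem', ← hcd.2 hLmem, ← hcd.2 hLmem',
        hbc, sub_self]
  · rintro ⟨u, hu, hMu⟩
    obtain ⟨c, d, rfl⟩ : ∃ c d, u = ![c, d] := ⟨u 0, u 1, by ext i; fin_cases i <;> rfl⟩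
    refine ⟨expSum ω c d, expSum ω (ω * c) (-(ω * d)), ?_, fun x _ => ?_, ?_⟩
    · by_contra! hzero
      have hev : expSum ω c d =ᶠ[𝓝 0] 0 :=
        Filter.mem_of_superset (Icc_mem_nhds (by linarith) hL) hzero
      obtain ⟨rfl, rfl⟩ := eq_zero_of_expSum_eventuallyEq_zero hω hev
      simp at hu
    · exact ⟨hasDerivAt_expSum ω c d x, hasDerivAt_expSum_mul_neg_mul ω c d x⟩
    · rw [boundaryMatrix_mulVec, sub_eq_zero] at hMu
      exact hMu

theorem boundaryMatrix_I_mul_eq_smul_mul (A B : Matrix (Fin 2) (Fin 2) ℂ) (k L : ℝ)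
    (hC : IsUnit (I • A - (k : ℂ) • B)) :
    boundaryMatrix A B (I * k) L = (-I * cexp (-(I * k * L))) • ((I • A - (k : ℂ) • B) *
      (cexp (2 * I * L * k) • (1 : Matrix (Fin 2) (Fin 2) ℂ) +
        ((I • A - (k : ℂ) • B)⁻¹ * (I • A + (k : ℂ) • B)) * !![0, 1; 1, 0])) := by
  set C := I • A - (k : ℂ) • B
  set D := I • A + (k : ℂ) • B
  have hCD : C * (C⁻¹ * D) = D :=
    mul_nonsing_inv_cancel_left C D ((isUnit_iff_isUnit_det C).1 hC)
  have hexp : cexp (-(I * k * L)) * cexp (2 * I * L * k) = cexp (I * k * L) := by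
    rw [← Complex.exp_add]; ring_nf
  have hplus : A + (I * k) • B = -I • C := by
    simp only [C, smul_sub, smul_smul]
    match_scalars
    · linear_combination I_sq
    · ring
  have hminus : A - (I * k) • B = -I • D := by
    simp only [D, smul_add, smul_smul]
    match_scalars
    · linear_combination I_sq
    · ring
  rw [Matrix.mul_add, Matrix.mul_smul, Matrix.mul_one, ← Matrix.mul_assoc, hCD, smul_add,
    smul_smul, mul_assoc, hexp, boundaryMatrix, hplus, hminus, Matrix.smul_mul]
  module

theorem stmt19_general (A B : Matrix (Fin 2) (Fin 2) ℂ)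
    (L lam : ℝ) (hL : 0 < L) (hlam : 0 < lam)
    (hInv : IsUnit (Complex.I • A - ((Real.sqrt lam : ℝ) : ℂ) • B)) :
    (∃ φ φ' : ℝ → ℂ, (∃ x ∈ Set.Icc (-L) L, φ x ≠ 0) ∧
        (∀ x ∈ Set.Icc (-L) L,
          HasDerivAt φ (φ' x) x ∧ HasDerivAt φ' (-(lam : ℂ) * φ x) x) ∧
        A.mulVec ![φ L, φ (-L)] = B.mulVec ![-(φ' L), φ' (-L)]) ↔
    ¬ IsUnit (Complex.exp (2 * Complex.I * L * Real.sqrt lam) • (1 : Matrix (Fin 2) (Fin 2) ℂ) +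
        ((Complex.I • A - ((Real.sqrt lam : ℝ) : ℂ) • B)⁻¹ *
          (Complex.I • A + ((Real.sqrt lam : ℝ) : ℂ) • B)) * !![0, 1; 1, 0]) := by
  have hk : ((Real.sqrt lam : ℝ) : ℂ) ≠ 0 := by exact_mod_cast (Real.sqrt_pos.2 hlam).ne'
  have hω : -(lam : ℂ) = (I * Real.sqrt lam) ^ 2 := by
    rw [mul_pow, I_sq, ← ofReal_pow, Real.sq_sqrt hlam.le]
    ring
  have hdet : (Complex.I • A - ((Real.sqrt lam : ℝ) : ℂ) • B).det ≠ 0 :=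
    ((isUnit_iff_isUnit_det _).1 hInv).ne_zero
  have hscalar : -I * cexp (-(I * Real.sqrt lam * L)) ≠ 0 :=
    mul_ne_zero (neg_ne_zero.2 I_ne_zero) (Complex.exp_ne_zero _)
  rw [hω, exists_solution_iff_exists_mulVec_boundaryMatrix_eq_zero A B (mul_ne_zero I_ne_zero hk)
      hL, exists_mulVec_eq_zero_iff, boundaryMatrix_I_mul_eq_smul_mul A B _ L hInv, det_smul,
    det_mul, isUnit_iff_isUnit_det, isUnit_iff_ne_zero, not_not]
  simp only [mul_eq_zero, pow_eq_zero_iff', hscalar, hdet, false_and, false_or]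

/-- Let `λ > 0` and `H_L = −d²/dx²` on `[−L,L]` with self-adjoint boundary
conditions given by `2×2` matrices `A, B` (`AB* = BA*`, `rank(A|B) = 2`) such that
`iA − √λ B` is invertible. Then `λ` is an eigenvalue of `H_L` (i.e. there is a nonzero solution
of `−φ'' = λφ` satisfying the boundary conditions) iff the matrix
`e^{2iL√λ} I + U(λ) σ_x` is singular, where `U(λ) = (iA − √λB)⁻¹(iA + √λB)` and
`σ_x = [[0,1],[1,0]]`. -/
theorem stmt19 (A B : Matrix (Fin 2) (Fin 2) ℂ)
    (h1 : A * Bᴴ = B * Aᴴ) (h2 : (Matrix.fromCols A B).rank = 2)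
    (L lam : ℝ) (hL : 0 < L) (hlam : 0 < lam)
    (hInv : IsUnit (Complex.I • A - ((Real.sqrt lam : ℝ) : ℂ) • B)) :
    (∃ φ φ' : ℝ → ℂ, (∃ x ∈ Set.Icc (-L) L, φ x ≠ 0) ∧
        (∀ x ∈ Set.Icc (-L) L,
          HasDerivAt φ (φ' x) x ∧ HasDerivAt φ' (-(lam : ℂ) * φ x) x) ∧
        A.mulVec ![φ L, φ (-L)] = B.mulVec ![-(φ' L), φ' (-L)]) ↔
    ¬ IsUnit (Complex.exp (2 * Complex.I * L * Real.sqrt lam) • (1 : Matrix (Fin 2) (Fin 2) ℂ) +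
        ((Complex.I • A - ((Real.sqrt lam : ℝ) : ℂ) • B)⁻¹ *
          (Complex.I • A + ((Real.sqrt lam : ℝ) : ℂ) • B)) * !![0, 1; 1, 0]) :=
  stmt19_general A B L lam hL hlam hInv
end
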